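/- arXiv:2501.10609 — 5 statements merged into one kernel-verified Lean document; each statement's English description precedes it below -/
import Mathlib

section
/- Let X^n be a process over a finite alphabet and Z^n be its output through a discrete memoryless channel with matrix Π. Then for each t and each sequence z^t with positive probability, P_{X_t|Z^t=z^t} = (Π(·, z_t) ⊙ (Π^{-T} P_{Z_t|Z^{t-1}=z^{t-1}})) / P(Z_t = z_t | Z^{t-1} = z^{t-1}). -/
open Finset Matrix
open scoped Classical

noncomputable section

/-- Joint law of `(X^n, Z^n)` when the source has law `pX` and the channel is a
DMC with matrix `K` (`K x z = P(Z_t = z | X_t = x)`). -/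
def dmcJoint {n : ℕ} {α : Type} [Fintype α]
    (pX : (Fin n → α) → ℝ) (K : Matrix α α ℝ) (x z : Fin n → α) : ℝ :=
  pX x * ∏ t, K (x t) (z t)

/-- Marginal law of `Z^n`. -/
def zMarg {n : ℕ} {α : Type} [Fintype α]
    (pX : (Fin n → α) → ℝ) (K : Matrix α α ℝ) (z : Fin n → α) : ℝ :=
  ∑ x : Fin n → α, dmcJoint pX K x z

/-- Probability of an event under the joint law. -/
def probE {n : ℕ} {α : Type} [Fintype α]
    (pX : (Fin n → α) → ℝ) (K : Matrix α α ℝ)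
    (E : (Fin n → α) → (Fin n → α) → Prop) : ℝ :=
  ∑ x : Fin n → α, ∑ z : Fin n → α, if E x z then dmcJoint pX K x z else 0

/-- Conditional law, under the joint law `Q` of a `Z`-sequence, of the `t`-th
coordinate given the coordinates `s` with `s + d ≤ t` (i.e. given `Z^{t-d}`;
`d = 1` is the causal conditional given `Z^{t-1}`). -/
def condDelay {n : ℕ} {α : Type} [Fintype α]
    (Q : (Fin n → α) → ℝ) (d : ℕ) (t : Fin n) (z : Fin n → α) (b : α) : ℝ :=
  (∑ z' : Fin n → α,
      if (∀ s : Fin n, (s : ℕ) + d ≤ (t : ℕ) → z' s = z s) ∧ z' t = b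
      then Q z' else 0) /
  (∑ z' : Fin n → α,
      if ∀ s : Fin n, (s : ℕ) + d ≤ (t : ℕ) → z' s = z s then Q z' else 0)

/-- KL divergence between two distributions on a finite type. -/
def klDiv {β : Type} [Fintype β] (P Q : β → ℝ) : ℝ :=
  ∑ b, P b * Real.log (P b / Q b)

/-- Maximal absolute entry of a matrix. -/
def matMaxAbs {α : Type} [Fintype α] [Nonempty α] (M : Matrix α α ℝ) : ℝ :=
  ⨆ p : α × α, |M p.1 p.2|

/-- The filter `X̂_B(F(q, K, z_t))`, i.e. the Bayes response (computed by `XB`)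
to `K(·, z_t) ⊙ (K^{-T} q)`, which is `P_{X_t | ⋯}` up to positive
normalization. -/
def hadFilter {α : Type} [Fintype α]
    (K : Matrix α α ℝ) (XB : (α → ℝ) → α) (q : α → ℝ) (zt : α) : α :=
  XB (fun a => K a zt * Matrix.mulVec (K⁻¹)ᵀ q a)

/-!
Let `w c = P(X_t = c, Z^{t-1} = z^{t-1})`. Since the channel is memoryless,
`P(X_t = c, Z^{t-1} = z^{t-1}, Z_t = b) = w c * Π(c, b)`, so the conditional law of `Z_t` given
`z^{t-1}` is the row vector `w Π` normalised by `∑ w`, and multiplying it by `Π⁻¹` recovers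
`w / ∑ w`. Bayes' rule `P(X_t = a | z^t) = w a * Π(a, z_t) / (w Π)(z_t)` then gives the formula,
the normalisation `∑ w` cancelling between numerator and denominator.
-/

theorem sum_ite_eqOn_prod {ι α R : Type*} [Fintype ι] [DecidableEq ι] [Fintype α]
    [CommSemiring R] (h : ι → α → R) (hrow : ∀ s, ∑ b, h s b = 1) (T : Finset ι)
    (g : ι → α) :
    ∑ f : ι → α, (if Set.EqOn f g T then ∏ s, h s (f s) else 0) =
      ∏ s ∈ T, h s (g s) := by
  have hfilter : ({f | Set.EqOn f g T} : Finset (ι → α)) =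
      Fintype.piFinset fun s => if s ∈ T then {g s} else univ := by
    ext f
    simp only [mem_filter, mem_univ, true_and, Fintype.mem_piFinset, Set.EqOn, mem_coe]
    refine forall_congr' fun s => ?_
    split_ifs <;> simp [*]
  calc _ = ∏ s, if s ∈ T then h s (g s) else 1 := by
        rw [← sum_filter, hfilter, ← prod_univ_sum]
        exact prod_congr rfl fun s _ => by split_ifs <;> simp [hrow]
    _ = ∏ s ∈ T, h s (g s) := by rw [prod_ite_mem, univ_inter]

theorem eqOn_update_insert_iff {ι β : Type*} [DecidableEq ι] {f g : ι → β} {T : Set ι}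
    {t : ι} (ht : t ∉ T) (b : β) :
    Set.EqOn f (Function.update g t b) (insert t T) ↔ Set.EqOn f g T ∧ f t = b := by
  simp only [Set.EqOn, Set.mem_insert_iff, forall_eq_or_imp, Function.update_self]
  rw [and_comm]
  refine and_congr_left' (forall₂_congr fun s hs => ?_)
  rw [Function.update_of_ne (ne_of_mem_of_not_mem hs ht)]

theorem Fin.forall_lt_eq_iff_eqOn_Iio {n : ℕ} {β : Type*} (f g : Fin n → β)
    (t : Fin n) :
    (∀ s : Fin n, (s : ℕ) + 1 ≤ (t : ℕ) → f s = g s) ↔ Set.EqOn f g ↑(Iio t) := by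
  rw [coe_Iio]
  rfl -- `(s : ℕ) + 1 ≤ t` unfolds to `s < t`

theorem Fin.forall_le_eq_iff_eqOn_Iio_and {n : ℕ} {β : Type*} (f g : Fin n → β)
    (t : Fin n) :
    (∀ s : Fin n, (s : ℕ) ≤ (t : ℕ) → f s = g s) ↔
      Set.EqOn f g ↑(Iio t) ∧ f t = g t := by
  rw [← eqOn_update_insert_iff (by simp), Function.update_eq_self, ← coe_insert,
    Finset.Iio_insert, coe_Iic]
  rfl

theorem Matrix.transpose_inv_mulVec_vecMul {ι R : Type*} [Fintype ι] [DecidableEq ι]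
    [CommRing R] {K : Matrix ι ι R} (hK : IsUnit K.det) (w : ι → R) :
    (K⁻¹)ᵀ *ᵥ (w ᵥ* K) = w := by
  rw [mulVec_transpose, vecMul_vecMul, mul_nonsing_inv K hK, vecMul_one]

section DMC

variable {n : ℕ} {α : Type} [Fintype α] {pX : (Fin n → α) → ℝ} {K : Matrix α α ℝ}

theorem sum_ite_eqOn_dmcJoint (hKrow : ∀ a, ∑ b, K a b = 1) (T : Finset (Fin n))
    (x g : Fin n → α) :
    ∑ z, (if Set.EqOn z g T then dmcJoint pX K x z else 0) =
      pX x * ∏ s ∈ T, K (x s) (g s) := by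
  simp only [dmcJoint, ← mul_ite_zero, ← mul_sum]
  exact congrArg _ (sum_ite_eqOn_prod (fun s b => K (x s) b) (fun s => hKrow (x s)) T g)

theorem probE_and_eqOn (hKrow : ∀ a, ∑ b, K a b = 1) (A : (Fin n → α) → Prop)
    (T : Finset (Fin n)) (g : Fin n → α) :
    probE pX K (fun x z => A x ∧ Set.EqOn z g T) =
      ∑ x, if A x then pX x * ∏ s ∈ T, K (x s) (g s) else 0 := by
  refine sum_congr rfl fun x _ => ?_
  by_cases hA : A x
  · simpa only [hA, true_and, if_true] using sum_ite_eqOn_dmcJoint hKrow T x g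
  · simp [hA]

theorem probE_eq_sum_probE_and {β : Type} [Fintype β] (φ : (Fin n → α) → β)
    (E : (Fin n → α) → (Fin n → α) → Prop) :
    probE pX K E = ∑ c, probE pX K (fun x z => φ x = c ∧ E x z) := by
  simp only [probE]
  symm
  rw [Finset.sum_comm]
  refine sum_congr rfl fun x _ => ?_
  rw [Finset.sum_comm]
  refine sum_congr rfl fun z _ => ?_
  rw [sum_eq_single (φ x)]
  · simp only [true_and]
  · exact fun c _ hc => if_neg fun h => hc h.1.symm
  · simp

theorem probE_mono (hpX0 : ∀ x, 0 ≤ pX x) (hK0 : ∀ a b, 0 ≤ K a b)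
    {E F : (Fin n → α) → (Fin n → α) → Prop} (hEF : ∀ x z, E x z → F x z) :
    probE pX K E ≤ probE pX K F := by
  refine sum_le_sum fun x _ => sum_le_sum fun z _ => ?_
  split_ifs with hE hF hF
  · exact le_rfl
  · exact absurd (hEF x z hE) hF
  · exact mul_nonneg (hpX0 x) (prod_nonneg fun s _ => hK0 _ _)
  · exact le_rfl

theorem sum_ite_zMarg_eq_probE (E : (Fin n → α) → Prop) [DecidablePred E] :
    ∑ z, (if E z then zMarg pX K z else 0) = probE pX K (fun _ z => E z) := by
  rw [probE, Finset.sum_comm]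
  refine sum_congr rfl fun z _ => ?_
  split_ifs <;> simp [zMarg]

theorem probE_and_eqOn_and_eq_mul (hKrow : ∀ a, ∑ b, K a b = 1) {T : Finset (Fin n)}
    {t : Fin n} (ht : t ∉ T) (g : Fin n → α) (c b : α) :
    probE pX K (fun x z => x t = c ∧ Set.EqOn z g T ∧ z t = b) =
      K c b * probE pX K (fun x z => x t = c ∧ Set.EqOn z g T) := by
  have hevent : (fun x z : Fin n → α => x t = c ∧ Set.EqOn z g T ∧ z t = b) =
      fun x z => x t = c ∧ Set.EqOn z (Function.update g t b) ↑(insert t T) := by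
    ext x z
    rw [coe_insert, eqOn_update_insert_iff (mem_coe.not.mpr ht)]
  rw [hevent, probE_and_eqOn hKrow, probE_and_eqOn hKrow, mul_sum]
  refine sum_congr rfl fun x _ => ?_
  split_ifs with hx
  · rw [prod_insert ht, Function.update_self, hx,
      prod_congr rfl fun s hs => by rw [Function.update_of_ne (ne_of_mem_of_not_mem hs ht)]]
    ring
  · simp

end DMC

theorem conditional_given_causal_observations_general
    {n : ℕ} {α : Type} [Fintype α]
    (pX : (Fin n → α) → ℝ) (hpX0 : ∀ x, 0 ≤ pX x)
    (K : Matrix α α ℝ) (hK0 : ∀ a b, 0 ≤ K a b) (hKrow : ∀ a, ∑ b, K a b = 1)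
    (hKdet : IsUnit K.det)
    (t : Fin n) (z : Fin n → α)
    (hpos : 0 < probE pX K (fun _ z' => ∀ s : Fin n, (s : ℕ) ≤ (t : ℕ) → z' s = z s))
    (a : α) :
    probE pX K (fun x' z' => x' t = a ∧ ∀ s : Fin n, (s : ℕ) ≤ (t : ℕ) → z' s = z s) /
        probE pX K (fun _ z' => ∀ s : Fin n, (s : ℕ) ≤ (t : ℕ) → z' s = z s)
      = K a (z t) * Matrix.mulVec (K⁻¹)ᵀ (condDelay (zMarg pX K) 1 t z) a /
          condDelay (zMarg pX K) 1 t z (z t) := by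
  set w : α → ℝ := fun c => probE pX K (fun x z' => x t = c ∧ Set.EqOn z' z ↑(Iio t))
  have hmarg : probE pX K (fun _ z' => Set.EqOn z' z ↑(Iio t)) = ∑ c, w c :=
    probE_eq_sum_probE_and (· t) _
  have hjoint (b : α) :
      probE pX K (fun _ z' => Set.EqOn z' z ↑(Iio t) ∧ z' t = b) = (w ᵥ* K) b := by
    rw [probE_eq_sum_probE_and (· t)]
    refine sum_congr rfl fun c _ => ?_
    rw [probE_and_eqOn_and_eq_mul hKrow (by simp), mul_comm]
  have hcond : condDelay (zMarg pX K) 1 t z = (∑ c, w c)⁻¹ • (w ᵥ* K) := by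
    ext b
    simp only [condDelay, Fin.forall_lt_eq_iff_eqOn_Iio, sum_ite_zMarg_eq_probE, hjoint, hmarg]
    rw [Pi.smul_apply, smul_eq_mul, inv_mul_eq_div]
  have hS : 0 < ∑ c, w c :=
    hmarg ▸ hpos.trans_le (probE_mono hpX0 hK0 fun _ z' h =>
      ((Fin.forall_le_eq_iff_eqOn_Iio_and z' z t).1 h).1)
  simp only [Fin.forall_le_eq_iff_eqOn_Iio_and, hcond, hjoint, mulVec_smul,
    Matrix.transpose_inv_mulVec_vecMul hKdet]
  rw [probE_and_eqOn_and_eq_mul hKrow (by simp), Pi.smul_apply, Pi.smul_apply, smul_eq_mul,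
    smul_eq_mul, mul_left_comm, mul_div_mul_left _ _ (inv_ne_zero hS.ne')]

/-- For a process `X^n` through a DMC with invertible matrix `K`,
for each `t` and each sequence `z^t` of positive probability,
`P_{X_t|Z^t=z^t} = (K(·, z_t) ⊙ (K^{-T} P_{Z_t|Z^{t-1}=z^{t-1}})) / P(Z_t = z_t | Z^{t-1} = z^{t-1})`. -/
theorem conditional_given_causal_observations
    {n : ℕ} {α : Type} [Fintype α] [Nonempty α]
    (pX : (Fin n → α) → ℝ) (hpX0 : ∀ x, 0 ≤ pX x) (hpX1 : ∑ x, pX x = 1)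
    (K : Matrix α α ℝ) (hK0 : ∀ a b, 0 ≤ K a b) (hKrow : ∀ a, ∑ b, K a b = 1)
    (hKdet : IsUnit K.det)
    (t : Fin n) (z : Fin n → α)
    (hpos : 0 < probE pX K (fun _ z' => ∀ s : Fin n, (s : ℕ) ≤ (t : ℕ) → z' s = z s))
    (a : α) :
    probE pX K (fun x' z' => x' t = a ∧ ∀ s : Fin n, (s : ℕ) ≤ (t : ℕ) → z' s = z s) /
        probE pX K (fun _ z' => ∀ s : Fin n, (s : ℕ) ≤ (t : ℕ) → z' s = z s)
      = K a (z t) * Matrix.mulVec (K⁻¹)ᵀ (condDelay (zMarg pX K) 1 t z) a /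
          condDelay (zMarg pX K) 1 t z (z t) :=
  conditional_given_causal_observations_general pX hpX0 K hK0 hKrow hKdet t z hpos a
end
end

section
/- Let X be a random variable on finite alphabet A_X with P_X = Π^{-T}P_Z for invertible Π, and let Q_Z be any probability vector. Then E[Λ(X, X̂_B(Π^{-T}Q_Z))] − E[Λ(X, X̂_B(Π^{-T}P_Z))] ≤ Λ_max · |Π^{-T}|_max · |A_X| · ‖Q_Z − P_Z‖₁. -/
open Finset Matrix

noncomputable section

/-- Let `X` have distribution `P_X = K^{-T} pZ` for an invertible
channel matrix `K`, and let `qZ` be any probability vector. Then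
`E[Λ(X, X̂_B(K^{-T} qZ))] − E[Λ(X, X̂_B(K^{-T} pZ))]
  ≤ Λmax |K^{-T}|_max |A_X| ‖qZ − pZ‖₁`. -/
theorem mismatched_delayed_single_letter_bound
    {α : Type} [Fintype α] [DecidableEq α] [Nonempty α]
    (K : Matrix α α ℝ) (hK0 : ∀ a b, 0 ≤ K a b) (hKrow : ∀ a, ∑ b, K a b = 1)
    (hKdet : IsUnit K.det)
    (pZ : α → ℝ) (hpZ0 : ∀ z, 0 ≤ pZ z) (hpZ1 : ∑ z, pZ z = 1)
    (qZ : α → ℝ) (hqZ0 : ∀ z, 0 ≤ qZ z) (hqZ1 : ∑ z, qZ z = 1)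
    (Λ : α → α → ℝ) (Λmax : ℝ)
    (hΛ0 : ∀ i j, 0 ≤ Λ i j) (hΛmax : ∀ i j, Λ i j ≤ Λmax)
    (XB : (α → ℝ) → α)
    (hXB : ∀ v : α → ℝ, ∀ j : α, ∑ i, Λ i (XB v) * v i ≤ ∑ i, Λ i j * v i) :
    (∑ x : α, Matrix.mulVec (K⁻¹)ᵀ pZ x * Λ x (XB (Matrix.mulVec (K⁻¹)ᵀ qZ)))
        - (∑ x : α, Matrix.mulVec (K⁻¹)ᵀ pZ x * Λ x (XB (Matrix.mulVec (K⁻¹)ᵀ pZ)))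
      ≤ Λmax * matMaxAbs (K⁻¹)ᵀ * (Fintype.card α : ℝ) * ∑ z, |qZ z - pZ z| := by
  classical
  set M := matMaxAbs (K⁻¹)ᵀ with hM
  set p := Matrix.mulVec (K⁻¹)ᵀ pZ with hp
  set q := Matrix.mulVec (K⁻¹)ᵀ qZ with hq
  set S := ∑ z, |qZ z - pZ z| with hSdef
  have hS0 : 0 ≤ S := Finset.sum_nonneg fun z _ => abs_nonneg _
  obtain ⟨a0⟩ := ‹Nonempty α›
  have hΛmax0 : 0 ≤ Λmax := le_trans (hΛ0 a0 a0) (hΛmax a0 a0)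
  have hMentry : ∀ x z, |(K⁻¹)ᵀ x z| ≤ M := by
    intro x z
    exact le_ciSup (Set.Finite.bddAbove (Set.finite_range
      (fun pr : α × α => |(K⁻¹)ᵀ pr.1 pr.2|))) (x, z)
  have hM0 : 0 ≤ M := le_trans (abs_nonneg _) (hMentry a0 a0)
  have hpq : ∀ x, |p x - q x| ≤ M * S := by
    intro x
    have hx : p x - q x = ∑ z, (K⁻¹)ᵀ x z * (pZ z - qZ z) := by
      simp [hp, hq, Matrix.mulVec, dotProduct, mul_sub, Finset.sum_sub_distrib]
    rw [hx]
    calc |∑ z, (K⁻¹)ᵀ x z * (pZ z - qZ z)|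
        ≤ ∑ z, |(K⁻¹)ᵀ x z * (pZ z - qZ z)| := Finset.abs_sum_le_sum_abs _ _
      _ ≤ ∑ z, M * |qZ z - pZ z| := by
          refine Finset.sum_le_sum fun z _ => ?_
          rw [abs_mul, abs_sub_comm (pZ z)]
          exact mul_le_mul_of_nonneg_right (hMentry x z) (abs_nonneg _)
      _ = M * S := by rw [← Finset.mul_sum]
  set a := XB q with ha
  set b := XB p with hb
  have hqle : ∑ x, q x * (Λ x a - Λ x b) ≤ 0 := by
    have h1 : ∑ x, q x * Λ x a ≤ ∑ x, q x * Λ x b := by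
      simpa [mul_comm] using hXB q b
    have : ∑ x, q x * (Λ x a - Λ x b)
        = (∑ x, q x * Λ x a) - ∑ x, q x * Λ x b := by
      rw [← Finset.sum_sub_distrib]; exact Finset.sum_congr rfl fun x _ => by ring
    rw [this]; linarith
  have key : (∑ x, p x * Λ x a) - (∑ x, p x * Λ x b)
      = (∑ x, (p x - q x) * (Λ x a - Λ x b)) + ∑ x, q x * (Λ x a - Λ x b) := by
    rw [← Finset.sum_add_distrib, ← Finset.sum_sub_distrib]
    exact Finset.sum_congr rfl fun x _ => by ring
  have hterm : ∀ x, (p x - q x) * (Λ x a - Λ x b) ≤ (M * S) * Λmax := by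
    intro x
    have h1 : (p x - q x) * (Λ x a - Λ x b) ≤ |p x - q x| * |Λ x a - Λ x b| := by
      calc (p x - q x) * (Λ x a - Λ x b) ≤ |(p x - q x) * (Λ x a - Λ x b)| := le_abs_self _
        _ = |p x - q x| * |Λ x a - Λ x b| := abs_mul _ _
    have h2 : |Λ x a - Λ x b| ≤ Λmax :=
      abs_le.mpr ⟨by linarith [hΛ0 x a, hΛmax x b], by linarith [hΛ0 x b, hΛmax x a]⟩
    calc (p x - q x) * (Λ x a - Λ x b) ≤ |p x - q x| * |Λ x a - Λ x b| := h1
      _ ≤ (M * S) * Λmax :=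
        mul_le_mul (hpq x) h2 (abs_nonneg _) (mul_nonneg hM0 hS0)
  calc (∑ x, p x * Λ x a) - (∑ x, p x * Λ x b)
      = (∑ x, (p x - q x) * (Λ x a - Λ x b)) + ∑ x, q x * (Λ x a - Λ x b) := key
    _ ≤ (∑ x, (p x - q x) * (Λ x a - Λ x b)) + 0 := by linarith
    _ = ∑ x, (p x - q x) * (Λ x a - Λ x b) := by ring
    _ ≤ ∑ _x : α, (M * S) * Λmax := Finset.sum_le_sum fun x _ => hterm x
    _ = (Fintype.card α : ℝ) * ((M * S) * Λmax) := by
        rw [Finset.sum_const, Finset.card_univ, nsmul_eq_mul]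
    _ = Λmax * M * (Fintype.card α : ℝ) * S := by ring
end
end

section
/- Suppose the loss Λ satisfies: for every x ∈ A_X there exists x̂ with Λ(x, x̂) = 0. Then the expected normalized loss of the Bayes-optimal causal filter is bounded by E[(1/n)Σ_{t=1}^n Λ(X_t, X̂_t^opt(Z^t))] ≤ √2 · |Π^{-T}|_max · |A_X| · Λ_max · √((1/n)·I(X^n; Z^n)), where I denotes mutual information. -/
open Finset Matrix
open scoped Classical

noncomputable section

/-- Mutual information `I(X^n; Z^n)` under the DMC joint law. -/
def mutInfo {n : ℕ} {α : Type} [Fintype α]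
    (pX : (Fin n → α) → ℝ) (K : Matrix α α ℝ) : ℝ :=
  ∑ x : Fin n → α, ∑ z : Fin n → α,
    dmcJoint pX K x z * Real.log (dmcJoint pX K x z / (pX x * zMarg pX K z))

/-!
Fix `t`. Given `X = x` and `Z^{t-1}`, the observation `Zₜ` is a fresh draw from the row
`K (x t)`, while the filter is fed the causal posterior `q = P(Zₜ = · | Z^{t-1})` in its place.
Because `K⁻ᵀ K (a) = δₐ`, the input of the filter differs from the genie input
`K(·, zₜ) ⊙ δ_{x t}`, whose Bayes response has zero loss, by `K(·, zₜ) ⊙ K⁻ᵀ (q - K (x t))`;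
hence the expected loss at time `t` is at most `Λmax |A| ‖K⁻ᵀ‖_max ‖q - K (x t)‖₁`.
Pinsker's inequality bounds this `ℓ¹` distance by `√(2 D(K (x t) ‖ q))`, the chain rule sums the
expected divergences over `t` to `I(Xⁿ; Zⁿ)`, and Cauchy–Schwarz over `(t, x, z)` gives the
square root.
-/

open InformationTheory (klFun klFun_apply klFun_one hasDerivAt_klFun continuous_klFun)

theorem three_mul_sq_div_le_two_mul_klFun {r : ℝ} (hr : 0 ≤ r) :
    3 * (r - 1) ^ 2 / (r + 2) ≤ 2 * klFun r := by
  set f : ℝ → ℝ := fun r => 2 * klFun r - 3 * (r - 1) ^ 2 / (r + 2) with hf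
  set f' : ℝ → ℝ := fun r => 2 * Real.log r - 3 * ((r - 1) * (r + 5)) / (r + 2) ^ 2 with hf'
  have hasDerivAt_f (r : ℝ) (hr : 0 < r) : HasDerivAt f (f' r) r := by
    have h := ((hasDerivAt_klFun hr.ne').const_mul 2).sub
      (((((hasDerivAt_id r).sub_const 1).pow 2).const_mul 3).div
        ((hasDerivAt_id r).add_const 2) (by simp only [id]; linarith))
    refine h.congr_deriv (f := f) ?_
    simp only [hf', id, Pi.pow_apply]
    field_simp
    ring
  have hasDerivAt_f' (r : ℝ) (hr : 0 < r) : HasDerivAt f' (2 / r - 54 / (r + 2) ^ 3) r := by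
    have h := ((Real.hasDerivAt_log hr.ne').const_mul 2).sub
      (((((hasDerivAt_id r).sub_const 1).mul ((hasDerivAt_id r).add_const 5)).const_mul 3).div
        (((hasDerivAt_id r).add_const 2).pow 2) (pow_ne_zero 2 (by simp only [id]; linarith)))
    refine h.congr_deriv (f := f') ?_
    simp only [id, Pi.pow_apply, Pi.mul_apply]
    field_simp
    ring
  have hconvex : ConvexOn ℝ (Set.Ici 0) f := by
    refine convexOn_of_hasDerivWithinAt2_nonneg (f' := f')
      (f'' := fun r => 2 / r - 54 / (r + 2) ^ 3) (convex_Ici 0) ?_ (fun r hr => ?_)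
      (fun r hr => ?_) (fun r hr => ?_)
    · exact (continuous_klFun.const_mul 2).continuousOn.sub
        (ContinuousOn.div (by fun_prop) (by fun_prop) fun r (hr : 0 ≤ r) => by positivity)
    all_goals rw [interior_Ici] at hr
    · exact (hasDerivAt_f r hr).hasDerivWithinAt
    · exact (hasDerivAt_f' r hr).hasDerivWithinAt
    · have hr : (0 : ℝ) < r := hr
      rw [sub_nonneg, div_le_div_iff₀ (by positivity) hr]
      -- `(r + 2) ^ 3 - 27 r = (r - 1) ^ 2 (r + 8)`
      nlinarith [mul_nonneg (sq_nonneg (r - 1)) (by positivity : (0 : ℝ) ≤ r + 8)]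
  have hmin : IsMinOn f (Set.Ici 0) 1 := by
    refine hconvex.isMinOn_of_rightDeriv_eq_zero (by simp) ?_
    rw [(hasDerivAt_f 1 one_pos).hasDerivWithinAt.derivWithin (uniqueDiffWithinAt_Ioi 1)]
    simp [hf']
  have h := hmin (Set.mem_Ici.2 hr)
  simp only [hf, klFun_one] at h
  norm_num at h
  linarith

theorem three_mul_sq_div_le_two_mul_mul_log_div {p q : ℝ} (hp : 0 ≤ p) (hq : 0 ≤ q)
    (hpq : q = 0 → p = 0) :
    3 * (p - q) ^ 2 / (p + 2 * q) ≤ 2 * (p * Real.log (p / q) - p + q) := by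
  rcases hq.eq_or_lt with rfl | hq
  · simp [hpq rfl]
  calc 3 * (p - q) ^ 2 / (p + 2 * q) = q * (3 * (p / q - 1) ^ 2 / (p / q + 2)) := by
        field_simp
    _ ≤ q * (2 * klFun (p / q)) :=
        mul_le_mul_of_nonneg_left (three_mul_sq_div_le_two_mul_klFun (by positivity)) hq.le
    _ = 2 * (p * Real.log (p / q) - p + q) := by
        rw [klFun_apply]
        field_simp
        ring

section Pinsker

variable {β : Type} [Fintype β] {P Q : β → ℝ}

theorem sum_three_mul_sq_div_le_two_mul_klDiv (hP0 : ∀ b, 0 ≤ P b) (hQ0 : ∀ b, 0 ≤ Q b)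
    (hP1 : ∑ b, P b = 1) (hQ1 : ∑ b, Q b = 1) (hPQ : ∀ b, Q b = 0 → P b = 0) :
    ∑ b, 3 * (P b - Q b) ^ 2 / (P b + 2 * Q b) ≤ 2 * klDiv P Q :=
  calc ∑ b, 3 * (P b - Q b) ^ 2 / (P b + 2 * Q b)
      ≤ ∑ b, 2 * (P b * Real.log (P b / Q b) - P b + Q b) :=
        sum_le_sum fun b _ => three_mul_sq_div_le_two_mul_mul_log_div (hP0 b) (hQ0 b) (hPQ b)
    _ = 2 * klDiv P Q := by
        simp only [mul_add, mul_sub, sum_add_distrib, sum_sub_distrib, ← mul_sum, hP1, hQ1,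
          klDiv]
        ring

theorem klDiv_nonneg (hP0 : ∀ b, 0 ≤ P b) (hQ0 : ∀ b, 0 ≤ Q b)
    (hP1 : ∑ b, P b = 1) (hQ1 : ∑ b, Q b = 1) (hPQ : ∀ b, Q b = 0 → P b = 0) :
    0 ≤ klDiv P Q := by
  have := sum_three_mul_sq_div_le_two_mul_klDiv hP0 hQ0 hP1 hQ1 hPQ
  have : 0 ≤ ∑ b, 3 * (P b - Q b) ^ 2 / (P b + 2 * Q b) :=
    sum_nonneg fun b _ => div_nonneg (by positivity) (by linarith [hP0 b, hQ0 b])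
  linarith

/-- Pinsker's inequality. -/
theorem sum_abs_sub_le_sqrt_two_mul_klDiv (hP0 : ∀ b, 0 ≤ P b) (hQ0 : ∀ b, 0 ≤ Q b)
    (hP1 : ∑ b, P b = 1) (hQ1 : ∑ b, Q b = 1) (hPQ : ∀ b, Q b = 0 → P b = 0) :
    ∑ b, |P b - Q b| ≤ √(2 * klDiv P Q) := by
  have hfactor (b : β) :
      |P b - Q b| = √(3 * (P b - Q b) ^ 2 / (P b + 2 * Q b)) * √((P b + 2 * Q b) / 3) := by
    rcases (add_nonneg (hP0 b) (mul_nonneg zero_le_two (hQ0 b))).eq_or_lt with h | h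
    · obtain ⟨hP, hQ⟩ : P b = 0 ∧ Q b = 0 := by constructor <;> linarith [hP0 b, hQ0 b]
      simp [hP, hQ]
    rw [← Real.sqrt_mul (by positivity), ← Real.sqrt_sq_eq_abs]
    congr 1
    field_simp
    exact (mul_div_cancel_right₀ _ (by linarith)).symm
  have hweights : ∑ b, (P b + 2 * Q b) / 3 = 1 := by
    rw [← sum_div, sum_add_distrib, ← mul_sum, hP1, hQ1]
    norm_num
  calc ∑ b, |P b - Q b|
      = ∑ b, √(3 * (P b - Q b) ^ 2 / (P b + 2 * Q b)) * √((P b + 2 * Q b) / 3) :=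
        sum_congr rfl fun b _ => hfactor b
    _ ≤ √(∑ b, 3 * (P b - Q b) ^ 2 / (P b + 2 * Q b)) * √(∑ b, (P b + 2 * Q b) / 3) :=
        Real.sum_sqrt_mul_sqrt_le _
          (fun b => div_nonneg (by positivity) (by linarith [hP0 b, hQ0 b]))
          (fun b => by linarith [hP0 b, hQ0 b])
    _ ≤ √(2 * klDiv P Q) := by
        rw [hweights, Real.sqrt_one, mul_one]
        exact Real.sqrt_le_sqrt (sum_three_mul_sq_div_le_two_mul_klDiv hP0 hQ0 hP1 hQ1 hPQ)

end Pinsker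

theorem sum_mul_sqrt_le_sqrt_mul_sqrt {ι : Type*} (s : Finset ι) {w a : ι → ℝ}
    (hw : ∀ i, 0 ≤ w i) (ha : ∀ i, 0 < w i → 0 ≤ a i) :
    ∑ i ∈ s, w i * √(a i) ≤ √(∑ i ∈ s, w i) * √(∑ i ∈ s, w i * a i) := by
  have hwa (i : ι) : 0 ≤ w i * a i := by
    rcases (hw i).eq_or_lt with h | h
    · simp [← h]
    exact mul_nonneg h.le (ha i h)
  have hterm (i : ι) : w i * √(a i) = √(w i) * √(w i * a i) := by
    rcases (hw i).eq_or_lt with h | h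
    · simp [← h]
    rw [Real.sqrt_mul (hw i), ← mul_assoc, Real.mul_self_sqrt (hw i)]
  simp only [hterm]
  exact Real.sum_sqrt_mul_sqrt_le s hw hwa

theorem sum_mul_le_sum_mul_add_mul_sum_abs_sub {ι β : Type*} [Fintype ι] {Λ : ι → β → ℝ} {Λmax : ℝ}
    (hΛ0 : ∀ i j, 0 ≤ Λ i j) (hΛmax : ∀ i j, Λ i j ≤ Λmax) {v w : ι → ℝ} {k j : β}
    (hk : ∑ i, Λ i k * v i ≤ ∑ i, Λ i j * v i) :
    ∑ i, Λ i k * w i ≤ ∑ i, Λ i j * w i + Λmax * ∑ i, |v i - w i| := by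
  have hcross (i : ι) : (Λ i j - Λ i k) * (v i - w i) ≤ Λmax * |v i - w i| := by
    refine (le_abs_self _).trans ?_
    rw [abs_mul]
    refine mul_le_mul_of_nonneg_right (abs_sub_le_iff.2 ⟨?_, ?_⟩) (abs_nonneg _)
    · linarith [hΛ0 i k, hΛmax i j]
    · linarith [hΛ0 i j, hΛmax i k]
  have hsplit : ∑ i, Λ i k * w i = ∑ i, Λ i k * v i - ∑ i, Λ i j * v i + ∑ i, Λ i j * w i
      + ∑ i, (Λ i j - Λ i k) * (v i - w i) := by
    simp only [← sum_sub_distrib, ← sum_add_distrib]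
    exact sum_congr rfl fun i _ => by ring
  have := sum_le_sum fun i (_ : i ∈ univ) => hcross i
  rw [← mul_sum] at this
  linarith

section MatrixBounds

variable {α : Type} [Fintype α]

theorem abs_le_matMaxAbs [Nonempty α] (M : Matrix α α ℝ) (i j : α) : |M i j| ≤ matMaxAbs M :=
  le_ciSup (f := fun p : α × α => |M p.1 p.2|) (Set.finite_range _).bddAbove (i, j)

theorem matMaxAbs_nonneg [Nonempty α] (M : Matrix α α ℝ) : 0 ≤ matMaxAbs M :=
  (abs_nonneg _).trans (abs_le_matMaxAbs M (Classical.arbitrary α) (Classical.arbitrary α))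

theorem mul_card_mul_matMaxAbs_nonneg [Nonempty α] {Λ : α → α → ℝ} {Λmax : ℝ}
    (hΛ0 : ∀ i j, 0 ≤ Λ i j) (hΛmax : ∀ i j, Λ i j ≤ Λmax) (M : Matrix α α ℝ) :
    0 ≤ Λmax * Fintype.card α * matMaxAbs M := by
  obtain ⟨a⟩ := ‹Nonempty α›
  exact mul_nonneg (mul_nonneg ((hΛ0 a a).trans (hΛmax a a)) (Nat.cast_nonneg _))
    (matMaxAbs_nonneg M)

theorem sum_abs_mulVec_le [Nonempty α] (M : Matrix α α ℝ) (y : α → ℝ) :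
    ∑ i, |(M *ᵥ y) i| ≤ Fintype.card α * matMaxAbs M * ∑ j, |y j| :=
  calc ∑ i, |(M *ᵥ y) i| ≤ ∑ i : α, ∑ j, matMaxAbs M * |y j| :=
        sum_le_sum fun i _ => (abs_sum_le_sum_abs _ _).trans <| sum_le_sum fun j _ => by
          rw [abs_mul]
          exact mul_le_mul_of_nonneg_right (abs_le_matMaxAbs M i j) (abs_nonneg _)
    _ = Fintype.card α * matMaxAbs M * ∑ j, |y j| := by
        rw [sum_const, card_univ, nsmul_eq_mul, ← mul_sum, mul_assoc]

theorem transpose_inv_mulVec_row {K : Matrix α α ℝ} (hK : IsUnit K.det) (a : α) :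
    (K⁻¹)ᵀ *ᵥ K a = Pi.single a 1 := by
  rw [mulVec_transpose, ← row_apply' K a, ← single_one_vecMul, vecMul_vecMul,
    mul_nonsing_inv K hK, vecMul_one]

theorem sum_mul_loss_hadFilter_le [Nonempty α] {K : Matrix α α ℝ} (hK0 : ∀ a b, 0 ≤ K a b)
    (hKrow : ∀ a, ∑ b, K a b = 1) (hKdet : IsUnit K.det) {Λ : α → α → ℝ} {Λmax : ℝ}
    (hΛ0 : ∀ i j, 0 ≤ Λ i j) (hΛmax : ∀ i j, Λ i j ≤ Λmax)
    (hΛzero : ∀ i : α, ∃ j : α, Λ i j = 0) {XB : (α → ℝ) → α}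
    (hXB : ∀ v : α → ℝ, ∀ j : α, ∑ i, Λ i (XB v) * v i ≤ ∑ i, Λ i j * v i) (a : α)
    (q : α → ℝ) :
    ∑ b, K a b * Λ a (hadFilter K XB q b)
      ≤ Λmax * Fintype.card α * matMaxAbs (K⁻¹)ᵀ * ∑ b, |q b - K a b| := by
  obtain ⟨j, hj⟩ := hΛzero a
  set e := (K⁻¹)ᵀ *ᵥ (q - K a) with he
  -- compare, at each observation `b`, with the input `K (·) b ⊙ δₐ` whose Bayes action is `j`
  have hobs (b : α) : K a b * Λ a (hadFilter K XB q b) ≤ Λmax * ∑ i, K i b * |e i| := by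
    have h := sum_mul_le_sum_mul_add_mul_sum_abs_sub hΛ0 hΛmax
      (w := fun i => K i b * (Pi.single a 1 : α → ℝ) i) (hXB (fun i => K i b * ((K⁻¹)ᵀ *ᵥ q) i) j)
    have hδ (k : α) : ∑ i, Λ i k * (K i b * (Pi.single a 1 : α → ℝ) i) = K a b * Λ a k := by
      simp [Pi.single_apply, mul_comm]
    have hdiff (i : α) :
        K i b * ((K⁻¹)ᵀ *ᵥ q) i - K i b * (Pi.single a 1 : α → ℝ) i = K i b * e i := by
      rw [he, mulVec_sub, ← transpose_inv_mulVec_row hKdet a, Pi.sub_apply, mul_sub]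
    simp only [hδ, hj, mul_zero, zero_add, hdiff, abs_mul, abs_of_nonneg (hK0 _ b)] at h
    exact h
  calc ∑ b, K a b * Λ a (hadFilter K XB q b) ≤ ∑ b, Λmax * ∑ i, K i b * |e i| :=
        sum_le_sum fun b _ => hobs b
    _ = Λmax * ∑ i, |e i| := by
        rw [← mul_sum, sum_comm]
        simp only [← sum_mul, hKrow, one_mul]
    _ ≤ Λmax * (Fintype.card α * matMaxAbs (K⁻¹)ᵀ * ∑ b, |q b - K a b|) :=
        mul_le_mul_of_nonneg_left (sum_abs_mulVec_le _ _) ((hΛ0 a j).trans (hΛmax a j))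
    _ = Λmax * Fintype.card α * matMaxAbs (K⁻¹)ᵀ * ∑ b, |q b - K a b| := by ring

end MatrixBounds

open Function

/-- Under a product law `∏ₛ k s (z s)`, redrawing coordinate `t` from its own marginal does not
change expectations. -/
theorem sum_prod_mul_eq_sum_prod_mul_update {ι α : Type*} [Fintype ι] [DecidableEq ι]
    [Fintype α] (k : ι → α → ℝ) {t : ι} (hkt : ∑ b, k t b = 1) (F : (ι → α) → ℝ) :
    ∑ z : ι → α, (∏ s, k s (z s)) * F z
      = ∑ z : ι → α, (∏ s, k s (z s)) * ∑ b, k t b * F (update z t b) := by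
  let e := Equiv.funSplitAt t α
  have hsplit (G : (ι → α) → ℝ) : ∑ z, G z = ∑ w : {s // s ≠ t} → α, ∑ c, G (e.symm (c, w)) := by
    rw [← e.symm.sum_comp, Fintype.sum_prod_type_right]
  have hprod (c : α) (w : {s // s ≠ t} → α) :
      ∏ s, k s (e.symm (c, w) s) = k t c * ∏ s : {s // s ≠ t}, k s (w s) := by
    rw [Fintype.prod_eq_mul_prod_subtype_ne _ t]
    congr 1
    · simp [e]
    · exact prod_congr rfl fun s _ => by simp [e, s.2]
  have hupdate (c b : α) (w : {s // s ≠ t} → α) : update (e.symm (c, w)) t b = e.symm (b, w) := by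
    ext s
    by_cases hs : s = t
    · subst hs; simp [e]
    · simp [e, hs]
  simp only [hsplit, hprod, hupdate]
  refine sum_congr rfl fun w _ => ?_
  rw [← sum_mul, ← sum_mul, hkt, one_mul, mul_sum]
  exact sum_congr rfl fun c _ => by ring

def prefixMass {n : ℕ} {α : Type} [Fintype α] (Q : (Fin n → α) → ℝ) (z : Fin n → α) (k : ℕ) :
    ℝ :=
  ∑ z', if ∀ s : Fin n, (s : ℕ) < k → z' s = z s then Q z' else 0

theorem forall_lt_succ_eq_update_iff {n : ℕ} {α : Type} {z z' : Fin n → α} {t : Fin n} {b : α} :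
    (∀ s : Fin n, (s : ℕ) < t + 1 → z' s = update z t b s)
      ↔ (∀ s : Fin n, (s : ℕ) < t → z' s = z s) ∧ z' t = b := by
  refine ⟨fun h => ⟨fun s hs => ?_, by simpa using h t (by omega)⟩, fun ⟨h, ht⟩ s hs => ?_⟩
  · rw [h s (by omega), update_of_ne (Fin.ne_of_lt hs)]
  · rcases (Nat.lt_succ_iff.1 hs).lt_or_eq with hs | hs
    · rw [update_of_ne (Fin.ne_of_lt hs), h s hs]
    · rw [Fin.ext hs, update_self, ht]

section PrefixMass

variable {n : ℕ} {α : Type} [Fintype α] {Q : (Fin n → α) → ℝ}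

theorem prefixMass_congr {z z' : Fin n → α} {k : ℕ} (h : ∀ s : Fin n, (s : ℕ) < k → z s = z' s) :
    prefixMass Q z k = prefixMass Q z' k :=
  sum_congr rfl fun y _ => if_congr (forall₂_congr fun s hs => by rw [h s hs]) rfl rfl

theorem prefixMass_zero (z : Fin n → α) : prefixMass Q z 0 = ∑ z', Q z' := by
  simp [prefixMass]

theorem prefixMass_length (z : Fin n → α) : prefixMass Q z n = Q z := by
  rw [prefixMass, sum_eq_single z]
  · simp
  · exact fun z' _ hz' => if_neg fun h => hz' (funext fun s => h s s.2)
  · simp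

theorem prefixMass_nonneg (hQ : ∀ z, 0 ≤ Q z) (z : Fin n → α) (k : ℕ) : 0 ≤ prefixMass Q z k :=
  sum_nonneg fun z' _ => by split_ifs <;> simp [hQ]

theorem le_prefixMass (hQ : ∀ z, 0 ≤ Q z) (z : Fin n → α) (k : ℕ) : Q z ≤ prefixMass Q z k := by
  have := single_le_sum (f := fun z' => if ∀ s : Fin n, (s : ℕ) < k → z' s = z s then Q z' else 0)
    (fun z' _ => by split_ifs <;> simp [hQ]) (mem_univ z)
  simpa [prefixMass] using this

theorem condDelay_one_eq_div (t : Fin n) (z : Fin n → α) (b : α) :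
    condDelay Q 1 t z b = prefixMass Q (update z t b) (t + 1) / prefixMass Q z t := by
  simp only [condDelay, prefixMass, forall_lt_succ_eq_update_iff, Nat.add_one_le_iff]

theorem sum_prefixMass_update (t : Fin n) (z : Fin n → α) :
    ∑ b, prefixMass Q (update z t b) (t + 1) = prefixMass Q z t := by
  simp only [prefixMass, forall_lt_succ_eq_update_iff]
  rw [sum_comm]
  refine sum_congr rfl fun z' _ => ?_
  by_cases h : ∀ s : Fin n, (s : ℕ) < t → z' s = z s
  · simp only [ite_and, if_pos h, sum_ite_eq, mem_univ, if_true]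
  · simp only [ite_and, if_neg h, sum_const_zero]

theorem condDelay_one_update (t : Fin n) (z : Fin n → α) (b : α) :
    condDelay Q 1 t (update z t b) = condDelay Q 1 t z := by
  ext b'
  rw [condDelay_one_eq_div, condDelay_one_eq_div, update_idem,
    prefixMass_congr fun s hs => update_of_ne (Fin.ne_of_lt hs) _ _]

theorem condDelay_one_nonneg (hQ : ∀ z, 0 ≤ Q z) (t : Fin n) (z : Fin n → α) (b : α) :
    0 ≤ condDelay Q 1 t z b := by
  rw [condDelay_one_eq_div]
  exact div_nonneg (prefixMass_nonneg hQ _ _) (prefixMass_nonneg hQ _ _)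

theorem condDelay_one_pos (hQ : ∀ z, 0 ≤ Q z) {t : Fin n} {z : Fin n → α} {b : α}
    (hb : 0 < Q (update z t b)) : 0 < condDelay Q 1 t z b := by
  rw [condDelay_one_eq_div, prefixMass_congr (z := z) (z' := update z t b)
    fun s hs => (update_of_ne (Fin.ne_of_lt hs) _ _).symm]
  exact div_pos (hb.trans_le (le_prefixMass hQ _ _)) (hb.trans_le (le_prefixMass hQ _ _))

theorem sum_condDelay_one (hQ : ∀ z, 0 ≤ Q z) {z : Fin n → α} (hz : 0 < Q z) (t : Fin n) :
    ∑ b, condDelay Q 1 t z b = 1 := by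
  simp only [condDelay_one_eq_div, ← sum_div, sum_prefixMass_update]
  exact div_self (hz.trans_le (le_prefixMass hQ z t)).ne'

theorem prod_condDelay_one_self (hQ : ∀ z, 0 ≤ Q z) (hQ1 : ∑ z, Q z = 1) {z : Fin n → α}
    (hz : 0 < Q z) : ∏ t, condDelay Q 1 t z (z t) = Q z := by
  have hpos (k : ℕ) : prefixMass Q z k ≠ 0 := (hz.trans_le (le_prefixMass hQ z k)).ne'
  have htelescope (m : ℕ) :
      ∏ k ∈ range m, prefixMass Q z (k + 1) / prefixMass Q z k = prefixMass Q z m := by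
    induction m with
    | zero => simp [prefixMass_zero, hQ1]
    | succ m ih => rw [prod_range_succ, ih, mul_div_cancel₀ _ (hpos m)]
  simp only [condDelay_one_eq_div, update_eq_self]
  rw [Fin.prod_univ_eq_prod_range (fun k => prefixMass Q z (k + 1) / prefixMass Q z k),
    htelescope, prefixMass_length]

end PrefixMass

section Channel

variable {n : ℕ} {α : Type} [Fintype α] {pX : (Fin n → α) → ℝ} {K : Matrix α α ℝ}

theorem dmcJoint_nonneg (hpX0 : ∀ x, 0 ≤ pX x) (hK0 : ∀ a b, 0 ≤ K a b) (x z : Fin n → α) :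
    0 ≤ dmcJoint pX K x z :=
  mul_nonneg (hpX0 x) (prod_nonneg fun _ _ => hK0 _ _)

theorem zMarg_nonneg (hpX0 : ∀ x, 0 ≤ pX x) (hK0 : ∀ a b, 0 ≤ K a b) (z : Fin n → α) :
    0 ≤ zMarg pX K z :=
  sum_nonneg fun x _ => dmcJoint_nonneg hpX0 hK0 x z

theorem dmcJoint_le_zMarg (hpX0 : ∀ x, 0 ≤ pX x) (hK0 : ∀ a b, 0 ≤ K a b) (x z : Fin n → α) :
    dmcJoint pX K x z ≤ zMarg pX K z :=
  single_le_sum (f := fun x => dmcJoint pX K x z) (fun x _ => dmcJoint_nonneg hpX0 hK0 x z)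
    (mem_univ x)

theorem sum_dmcJoint_mul_eq_sum_dmcJoint_mul_update (hKrow : ∀ a, ∑ b, K a b = 1)
    (x : Fin n → α) (t : Fin n) (F : (Fin n → α) → ℝ) :
    ∑ z, dmcJoint pX K x z * F z
      = ∑ z, dmcJoint pX K x z * ∑ b, K (x t) b * F (update z t b) := by
  simp only [dmcJoint, mul_assoc, ← mul_sum]
  rw [sum_prod_mul_eq_sum_prod_mul_update (fun s => K (x s)) (hKrow (x t))]

theorem sum_sum_dmcJoint (hpX1 : ∑ x, pX x = 1) (hKrow : ∀ a, ∑ b, K a b = 1) :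
    ∑ x, ∑ z, dmcJoint pX K x z = 1 := by
  have hchannel (x : Fin n → α) : ∑ z : Fin n → α, ∏ s, K (x s) (z s) = 1 := by
    rw [← Fintype.prod_sum fun s b => K (x s) b]
    simp [hKrow]
  simp only [dmcJoint, ← mul_sum, hchannel, mul_one, hpX1]

theorem sum_zMarg (hpX1 : ∑ x, pX x = 1) (hKrow : ∀ a, ∑ b, K a b = 1) :
    ∑ z, zMarg pX K z = 1 := by
  simp only [zMarg]
  rw [sum_comm, sum_sum_dmcJoint hpX1 hKrow]

theorem dmcJoint_update_mul (x z : Fin n → α) (t : Fin n) (b : α) :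
    dmcJoint pX K x (update z t b) * K (x t) (z t) = dmcJoint pX K x z * K (x t) b := by
  simp only [dmcJoint, ← mul_prod_erase univ _ (mem_univ t), update_self]
  rw [prod_congr rfl fun s hs => by rw [update_of_ne (ne_of_mem_erase hs)]]
  ring

theorem condDelay_zMarg_pos (hpX0 : ∀ x, 0 ≤ pX x) (hK0 : ∀ a b, 0 ≤ K a b)
    {x z : Fin n → α} (hxz : 0 < dmcJoint pX K x z) {t : Fin n} {b : α} (hb : 0 < K (x t) b) :
    0 < condDelay (zMarg pX K) 1 t z b := by
  have hupdate : 0 < dmcJoint pX K x (update z t b) := by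
    refine (dmcJoint_nonneg hpX0 hK0 _ _).lt_of_ne fun h => ?_
    have := dmcJoint_update_mul (pX := pX) (K := K) x z t b
    rw [← h, zero_mul] at this
    exact (mul_pos hxz hb).ne' this.symm
  exact condDelay_one_pos (zMarg_nonneg hpX0 hK0)
    (hupdate.trans_le (dmcJoint_le_zMarg hpX0 hK0 _ _))

theorem sum_condDelay_zMarg (hpX0 : ∀ x, 0 ≤ pX x) (hK0 : ∀ a b, 0 ≤ K a b)
    {x z : Fin n → α} (hxz : 0 < dmcJoint pX K x z) (t : Fin n) :
    ∑ b, condDelay (zMarg pX K) 1 t z b = 1 :=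
  sum_condDelay_one (zMarg_nonneg hpX0 hK0) (hxz.trans_le (dmcJoint_le_zMarg hpX0 hK0 x z)) t

theorem eq_zero_of_condDelay_zMarg_eq_zero (hpX0 : ∀ x, 0 ≤ pX x) (hK0 : ∀ a b, 0 ≤ K a b)
    {x z : Fin n → α} (hxz : 0 < dmcJoint pX K x z) {t : Fin n} {b : α}
    (hb : condDelay (zMarg pX K) 1 t z b = 0) : K (x t) b = 0 :=
  by_contra fun hKb => (condDelay_zMarg_pos hpX0 hK0 hxz ((hK0 _ b).lt_of_ne' hKb)).ne' hb

theorem sum_dmcJoint_mul_klDiv_eq_mutInfo (hpX0 : ∀ x, 0 ≤ pX x) (hpX1 : ∑ x, pX x = 1)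
    (hK0 : ∀ a b, 0 ≤ K a b) (hKrow : ∀ a, ∑ b, K a b = 1) :
    ∑ t, ∑ x, ∑ z, dmcJoint pX K x z * klDiv (K (x t)) (condDelay (zMarg pX K) 1 t z)
      = mutInfo pX K := by
  have hklDiv (t : Fin n) (x : Fin n → α) :
      ∑ z, dmcJoint pX K x z * klDiv (K (x t)) (condDelay (zMarg pX K) 1 t z)
        = ∑ z, dmcJoint pX K x z * (Real.log (K (x t) (z t))
            - Real.log (condDelay (zMarg pX K) 1 t z (z t))) := by
    rw [sum_dmcJoint_mul_eq_sum_dmcJoint_mul_update hKrow x t (fun z => Real.log (K (x t) (z t))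
      - Real.log (condDelay (zMarg pX K) 1 t z (z t)))]
    refine sum_congr rfl fun z _ => ?_
    rcases (dmcJoint_nonneg hpX0 hK0 x z).eq_or_lt with h | h
    · simp [← h]
    simp only [update_self, condDelay_one_update, klDiv]
    refine congrArg _ (sum_congr rfl fun b _ => ?_)
    rcases (hK0 (x t) b).eq_or_lt with hb | hb
    · simp [← hb]
    rw [Real.log_div hb.ne' (condDelay_zMarg_pos hpX0 hK0 h hb).ne']
  have hlog (x z : Fin n → α) :
      ∑ t, dmcJoint pX K x z * (Real.log (K (x t) (z t))
          - Real.log (condDelay (zMarg pX K) 1 t z (z t)))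
        = dmcJoint pX K x z * Real.log (dmcJoint pX K x z / (pX x * zMarg pX K z)) := by
    rcases (dmcJoint_nonneg hpX0 hK0 x z).eq_or_lt with h | h
    · simp [← h]
    have hK (t : Fin n) : K (x t) (z t) ≠ 0 := fun h0 =>
      h.ne' (by rw [dmcJoint, prod_eq_zero (mem_univ t) h0, mul_zero])
    have hpX : pX x ≠ 0 := fun h0 => h.ne' (by simp [dmcJoint, h0])
    have hQ : 0 < zMarg pX K z := h.trans_le (dmcJoint_le_zMarg hpX0 hK0 x z)
    have hq (t : Fin n) : condDelay (zMarg pX K) 1 t z (z t) ≠ 0 :=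
      (condDelay_zMarg_pos hpX0 hK0 h ((hK0 _ _).lt_of_ne' (hK t))).ne'
    rw [← mul_sum, sum_sub_distrib, ← Real.log_prod fun t _ => hK t,
      ← Real.log_prod fun t _ => hq t,
      prod_condDelay_one_self (zMarg_nonneg hpX0 hK0) (sum_zMarg hpX1 hKrow) hQ,
      ← Real.log_div (prod_ne_zero_iff.2 fun t _ => hK t) hQ.ne', dmcJoint,
      mul_div_mul_left _ _ hpX]
  calc ∑ t, ∑ x, ∑ z, dmcJoint pX K x z * klDiv (K (x t)) (condDelay (zMarg pX K) 1 t z)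
      = ∑ x, ∑ z, ∑ t, dmcJoint pX K x z * (Real.log (K (x t) (z t))
          - Real.log (condDelay (zMarg pX K) 1 t z (z t))) := by
        simp only [hklDiv]
        rw [sum_comm]
        exact sum_congr rfl fun x _ => sum_comm
    _ = mutInfo pX K := by simp only [hlog, mutInfo]

theorem sum_dmcJoint_mul_loss_hadFilter_le [Nonempty α] (hpX0 : ∀ x, 0 ≤ pX x)
    (hK0 : ∀ a b, 0 ≤ K a b) (hKrow : ∀ a, ∑ b, K a b = 1) (hKdet : IsUnit K.det)
    {Λ : α → α → ℝ} {Λmax : ℝ} (hΛ0 : ∀ i j, 0 ≤ Λ i j) (hΛmax : ∀ i j, Λ i j ≤ Λmax)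
    (hΛzero : ∀ i : α, ∃ j : α, Λ i j = 0) {XB : (α → ℝ) → α}
    (hXB : ∀ v : α → ℝ, ∀ j : α, ∑ i, Λ i (XB v) * v i ≤ ∑ i, Λ i j * v i) (t : Fin n) :
    ∑ x, ∑ z, dmcJoint pX K x z * Λ (x t) (hadFilter K XB (condDelay (zMarg pX K) 1 t z) (z t))
      ≤ Λmax * Fintype.card α * matMaxAbs (K⁻¹)ᵀ *
        ∑ x, ∑ z, dmcJoint pX K x z * √(2 * klDiv (K (x t)) (condDelay (zMarg pX K) 1 t z)) := by
  have hC := mul_card_mul_matMaxAbs_nonneg hΛ0 hΛmax (K⁻¹)ᵀ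
  rw [mul_sum]
  refine sum_le_sum fun x _ => ?_
  rw [sum_dmcJoint_mul_eq_sum_dmcJoint_mul_update hKrow x t, mul_sum]
  refine sum_le_sum fun z _ => ?_
  simp only [update_self, condDelay_one_update]
  rcases (dmcJoint_nonneg hpX0 hK0 x z).eq_or_lt with h | h
  · simp [← h]
  rw [mul_left_comm]
  refine mul_le_mul_of_nonneg_left ?_ h.le
  have hPinsker := sum_abs_sub_le_sqrt_two_mul_klDiv (hK0 (x t))
    (condDelay_one_nonneg (zMarg_nonneg hpX0 hK0) t z) (hKrow (x t))
    (sum_condDelay_zMarg hpX0 hK0 h t) fun b => eq_zero_of_condDelay_zMarg_eq_zero hpX0 hK0 h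
  calc _ ≤ _ := sum_mul_loss_hadFilter_le hK0 hKrow hKdet hΛ0 hΛmax hΛzero hXB (x t)
        (condDelay (zMarg pX K) 1 t z)
    _ ≤ _ := mul_le_mul_of_nonneg_left (by simpa only [abs_sub_comm] using hPinsker) hC

theorem sum_dmcJoint_mul_sqrt_klDiv_le (hpX0 : ∀ x, 0 ≤ pX x) (hpX1 : ∑ x, pX x = 1)
    (hK0 : ∀ a b, 0 ≤ K a b) (hKrow : ∀ a, ∑ b, K a b = 1) :
    ∑ t, ∑ x, ∑ z, dmcJoint pX K x z * √(2 * klDiv (K (x t)) (condDelay (zMarg pX K) 1 t z))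
      ≤ √n * √(2 * mutInfo pX K) := by
  have hCS := sum_mul_sqrt_le_sqrt_mul_sqrt univ
    (w := fun p : Fin n × (Fin n → α) × (Fin n → α) => dmcJoint pX K p.2.1 p.2.2)
    (a := fun p => 2 * klDiv (K (p.2.1 p.1)) (condDelay (zMarg pX K) 1 p.1 p.2.2))
    (fun p => dmcJoint_nonneg hpX0 hK0 _ _) fun p hp => mul_nonneg zero_le_two <|
      klDiv_nonneg (hK0 _) (condDelay_one_nonneg (zMarg_nonneg hpX0 hK0) _ _) (hKrow _)
        (sum_condDelay_zMarg hpX0 hK0 hp _) fun b => eq_zero_of_condDelay_zMarg_eq_zero hpX0 hK0 hp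
  have hmass : ∑ t : Fin n, ∑ x, ∑ z, dmcJoint pX K x z = n := by
    simp [sum_sum_dmcJoint hpX1 hKrow]
  have hinfo : ∑ t, ∑ x, ∑ z, dmcJoint pX K x z *
      (2 * klDiv (K (x t)) (condDelay (zMarg pX K) 1 t z)) = 2 * mutInfo pX K := by
    simp only [mul_left_comm _ (2 : ℝ), ← mul_sum]
    rw [sum_dmcJoint_mul_klDiv_eq_mutInfo hpX0 hpX1 hK0 hKrow]
  simpa only [Fintype.sum_prod_type, hmass, hinfo] using hCS

end Channel

theorem mutual_information_upper_bound_causal_general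
    {n : ℕ} {α : Type} [Fintype α] [Nonempty α]
    (pX : (Fin n → α) → ℝ) (hpX0 : ∀ x, 0 ≤ pX x) (hpX1 : ∑ x, pX x = 1)
    (K : Matrix α α ℝ) (hK0 : ∀ a b, 0 ≤ K a b) (hKrow : ∀ a, ∑ b, K a b = 1)
    (hKdet : IsUnit K.det)
    (Λ : α → α → ℝ) (Λmax : ℝ)
    (hΛ0 : ∀ i j, 0 ≤ Λ i j) (hΛmax : ∀ i j, Λ i j ≤ Λmax)
    (hΛzero : ∀ i : α, ∃ j : α, Λ i j = 0)
    (XB : (α → ℝ) → α)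
    (hXB : ∀ v : α → ℝ, ∀ j : α, ∑ i, Λ i (XB v) * v i ≤ ∑ i, Λ i j * v i) :
    ∑ x : Fin n → α, ∑ z : Fin n → α, dmcJoint pX K x z *
        ((n : ℝ)⁻¹ * ∑ t, Λ (x t) (hadFilter K XB (condDelay (zMarg pX K) 1 t z) (z t)))
      ≤ Real.sqrt 2 * matMaxAbs (K⁻¹)ᵀ * (Fintype.card α : ℝ) * Λmax *
        Real.sqrt ((n : ℝ)⁻¹ * mutInfo pX K) := by
  have hC := mul_card_mul_matMaxAbs_nonneg hΛ0 hΛmax (K⁻¹)ᵀ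
  have hn : (n : ℝ)⁻¹ * √n = √(n : ℝ)⁻¹ := by
    rw [inv_mul_eq_div, Real.sqrt_div_self', one_div, Real.sqrt_inv]
  calc ∑ x, ∑ z, dmcJoint pX K x z *
        ((n : ℝ)⁻¹ * ∑ t, Λ (x t) (hadFilter K XB (condDelay (zMarg pX K) 1 t z) (z t)))
      = (n : ℝ)⁻¹ * ∑ t, ∑ x, ∑ z, dmcJoint pX K x z *
          Λ (x t) (hadFilter K XB (condDelay (zMarg pX K) 1 t z) (z t)) := by
        simp only [mul_sum, mul_left_comm _ (n : ℝ)⁻¹]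
        exact (sum_congr rfl fun x _ => sum_comm).trans sum_comm
    _ ≤ (n : ℝ)⁻¹ * ∑ t, Λmax * Fintype.card α * matMaxAbs (K⁻¹)ᵀ * ∑ x, ∑ z,
          dmcJoint pX K x z * √(2 * klDiv (K (x t)) (condDelay (zMarg pX K) 1 t z)) := by
        gcongr with t
        exact sum_dmcJoint_mul_loss_hadFilter_le hpX0 hK0 hKrow hKdet hΛ0 hΛmax hΛzero hXB t
    _ ≤ (n : ℝ)⁻¹ * (Λmax * Fintype.card α * matMaxAbs (K⁻¹)ᵀ * (√n * √(2 * mutInfo pX K))) := by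
        rw [← mul_sum]
        gcongr
        exact sum_dmcJoint_mul_sqrt_klDiv_le hpX0 hpX1 hK0 hKrow
    _ = √2 * matMaxAbs (K⁻¹)ᵀ * Fintype.card α * Λmax * √((n : ℝ)⁻¹ * mutInfo pX K) := by
        rw [Real.sqrt_mul zero_le_two, Real.sqrt_mul (inv_nonneg.2 (Nat.cast_nonneg n)), ← hn]
        ring

/-- mutual-information upper bound on the Bayes-optimal causal
filtering performance. If for every `x` there is `x̂` with `Λ(x, x̂) = 0`, then
`E[(1/n) ∑_t Λ(X_t, X̂_t^opt(Z^t))] ≤ √2 |K^{-T}|_max |A_X| Λmax √((1/n) I(X^n;Z^n))`. -/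
theorem mutual_information_upper_bound_causal
    {n : ℕ} (hn : 0 < n) {α : Type} [Fintype α] [Nonempty α]
    (pX : (Fin n → α) → ℝ) (hpX0 : ∀ x, 0 ≤ pX x) (hpX1 : ∑ x, pX x = 1)
    (K : Matrix α α ℝ) (hK0 : ∀ a b, 0 ≤ K a b) (hKrow : ∀ a, ∑ b, K a b = 1)
    (hKdet : IsUnit K.det)
    (Λ : α → α → ℝ) (Λmax : ℝ)
    (hΛ0 : ∀ i j, 0 ≤ Λ i j) (hΛmax : ∀ i j, Λ i j ≤ Λmax)
    (hΛzero : ∀ i : α, ∃ j : α, Λ i j = 0)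
    (XB : (α → ℝ) → α)
    (hXB : ∀ v : α → ℝ, ∀ j : α, ∑ i, Λ i (XB v) * v i ≤ ∑ i, Λ i j * v i) :
    ∑ x : Fin n → α, ∑ z : Fin n → α, dmcJoint pX K x z *
        ((n : ℝ)⁻¹ * ∑ t, Λ (x t) (hadFilter K XB (condDelay (zMarg pX K) 1 t z) (z t)))
      ≤ Real.sqrt 2 * matMaxAbs (K⁻¹)ᵀ * (Fintype.card α : ℝ) * Λmax *
        Real.sqrt ((n : ℝ)⁻¹ * mutInfo pX K) :=
  mutual_information_upper_bound_causal_general pX hpX0 hpX1 K hK0 hKrow hKdet Λ Λmax hΛ0 hΛmax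
    hΛzero XB hXB
end
end

section
/- Let A_X = A_X̂ = Z/mZ and Λ(x,x') = ρ(x − x') for a function ρ with ρ(0)=0 (subtraction mod m). Define φ(D) = max{H(U) : U random variable on A_X with E[ρ(U)] ≤ D}. Then for any fixed integer l and any filters X̂_t(Z^{t+l}), φ(E[(1/n)Σ_{t=1}^n Λ(X_t, X̂_t(Z^{t+l}))]) ≥ (1/n)Σ_{t=1}^n H(X_t | X^{t-1}, Z^{t+l}); equivalently, the expected normalized loss of the optimal filter with lookahead l is at least φ^{-1}((1/n)H(X^n‖Z^{n+l})). -/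
open Finset
open scoped Classical

noncomputable section

/-- Shannon entropy of a distribution on a finite type (natural log). -/
def ent {β : Type} [Fintype β] (u : β → ℝ) : ℝ :=
  ∑ b, Real.negMulLog (u b)

/-- `φ(D) = max { H(U) : U over ZMod m, E[ρ(U)] ≤ D }`. -/
def phi (m : ℕ) [NeZero m] (ρ : ZMod m → ℝ) (D : ℝ) : ℝ :=
  sSup {h : ℝ | ∃ u : ZMod m → ℝ,
    (∀ i, 0 ≤ u i) ∧ (∑ i, u i = 1) ∧ (∑ i, u i * ρ i ≤ D) ∧ h = ent u}

/-- Conditional entropy `H(X_t | X^{t-1}, Z^{t+l})` under the joint law `μ` of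
`(X^n, Z^{n+l})`, written as the expectation under `μ` of minus the log of the
conditional probability of the event `{X_t = x_t}` given
`{X^{t-1} = x^{t-1}, Z^{t+l} = z^{t+l}}`. -/
def condEntT {n l m : ℕ} [NeZero m] {β : Type} [Fintype β]
    (μ : (Fin n → ZMod m) × (Fin (n + l) → β) → ℝ) (t : Fin n) : ℝ :=
  -∑ x : Fin n → ZMod m, ∑ z : Fin (n + l) → β, μ (x, z) *
      Real.log
        ((∑ p : (Fin n → ZMod m) × (Fin (n + l) → β),
            if p.1 t = x t ∧ (∀ s : Fin n, s < t → p.1 s = x s) ∧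
                (∀ s : Fin (n + l), (s : ℕ) ≤ (t : ℕ) + l → p.2 s = z s)
            then μ p else 0) /
          (∑ p : (Fin n → ZMod m) × (Fin (n + l) → β),
            if (∀ s : Fin n, s < t → p.1 s = x s) ∧
                (∀ s : Fin (n + l), (s : ℕ) ≤ (t : ℕ) + l → p.2 s = z s)
            then μ p else 0))

/-- Log-sum inequality in the concave direction: if the `b c` are nonnegative
weights summing to `1` and `0 ≤ a c`, with `a c = 0` whenever `b c = 0`, then
`∑ -(a c log (a c / b c)) ≤ negMulLog (∑ a c)`. -/
lemma aux_LS {γ : Type*} [Fintype γ] (a b : γ → ℝ) (ha : ∀ c, 0 ≤ a c)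
    (hb : ∀ c, 0 ≤ b c) (hb1 : ∑ c, b c = 1) (hab : ∀ c, b c = 0 → a c = 0) :
    ∑ c, -(a c * Real.log (a c / b c)) ≤ Real.negMulLog (∑ c, a c) := by
  classical
  set t := Finset.univ.filter (fun c => b c ≠ 0) with ht
  have hbt : ∑ c ∈ t, b c = 1 := by
    rw [← hb1]; exact Finset.sum_filter_of_ne (fun c _ h => h)
  have hat : ∑ c ∈ t, a c = ∑ c, a c :=
    Finset.sum_filter_of_ne (fun c _ h hb0 => h (hab c hb0))
  have jensen := Real.concaveOn_negMulLog.le_map_sum (t := t) (w := b)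
      (p := fun c => a c / b c) (fun i _ => hb i) hbt
      (fun i _ => Set.mem_Ici.2 (div_nonneg (ha i) (hb i)))
  have h1 : ∀ i ∈ t, b i • Real.negMulLog (a i / b i) = -(a i * Real.log (a i / b i)) := by
    intro i hi
    have hbi : b i ≠ 0 := (Finset.mem_filter.1 hi).2
    have hba : b i * (a i / b i) = a i := by field_simp
    rw [smul_eq_mul]
    simp only [Real.negMulLog]
    have : b i * (-(a i / b i) * Real.log (a i / b i))
        = -(b i * (a i / b i) * Real.log (a i / b i)) := by ring
    rw [this, hba]
  have h2 : ∀ i ∈ t, b i • (a i / b i) = a i := by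
    intro i hi
    have hbi : b i ≠ 0 := (Finset.mem_filter.1 hi).2
    rw [smul_eq_mul]; field_simp
  calc ∑ c, -(a c * Real.log (a c / b c))
      = ∑ c ∈ t, -(a c * Real.log (a c / b c)) := by
        refine (Finset.sum_filter_of_ne (fun c _ h => ?_)).symm
        intro hb0
        rw [hab c hb0] at h
        simp at h
    _ = ∑ c ∈ t, b c • Real.negMulLog (a c / b c) :=
        (Finset.sum_congr rfl h1).symm
    _ ≤ Real.negMulLog (∑ c ∈ t, b c • (a c / b c)) := jensen
    _ = Real.negMulLog (∑ c, a c) := by rw [Finset.sum_congr rfl h2, hat]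

/-- Mixture bound: if the rows `N c` have total masses `w c` summing to `1`,
then the total "conditional entropy" is at most the entropy of the mixture. -/
lemma aux_LB {γ : Type*} [Fintype γ] {m : ℕ} [NeZero m] (N : γ → ZMod m → ℝ)
    (w : γ → ℝ) (hN : ∀ c i, 0 ≤ N c i) (hNw : ∀ c, ∑ i, N c i = w c)
    (hw1 : ∑ c, w c = 1) :
    ∑ c, ∑ i, -(N c i * Real.log (N c i / w c)) ≤ ent (fun i => ∑ c, N c i) := by
  rw [Finset.sum_comm]
  unfold ent
  refine Finset.sum_le_sum fun i _ => ?_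
  refine aux_LS (fun c => N c i) w (fun c => hN c i)
    (fun c => by rw [← hNw c]; exact Finset.sum_nonneg fun j _ => hN c j) hw1
    (fun c h0 => ?_)
  have hz : ∑ j, N c j = 0 := by rw [hNw c, h0]
  exact (Finset.sum_eq_zero_iff_of_nonneg (fun j _ => hN c j)).1 hz i (Finset.mem_univ i)

/-- `ite` congruence with explicitly given decidability evidence. -/
lemma aux_ite_eq_of_iff {σ : Sort*} {c1 c2 : Prop} {d1 : Decidable c1} {d2 : Decidable c2}
    (h : c1 ↔ c2) (a b : σ) : (@ite _ c1 d1 a b) = (@ite _ c2 d2 a b) := by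
  cases d1 with
  | isTrue hc =>
    cases d2 with
    | isTrue hc2 => rfl
    | isFalse hc2 => exact absurd (h.mp hc) hc2
  | isFalse hc =>
    cases d2 with
    | isTrue hc2 => exact absurd (h.mpr hc2) hc
    | isFalse hc2 => rfl

/-- Grouping a sum along the fibers of a two-component map. -/
lemma aux_group_sum2 {α γ' : Type*} [Fintype α] [Fintype γ'] {m : ℕ} [NeZero m]
    (μ : α → ℝ) (C : α → γ') (E : α → ZMod m) (G : γ' → ZMod m → ℝ) :
    ∑ p, μ p * G (C p) (E p)
      = ∑ c, ∑ i, (∑ p, if C p = c ∧ E p = i then μ p else 0) * G c i := by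
  calc ∑ p, μ p * G (C p) (E p)
      = ∑ p, ∑ c, ∑ i : ZMod m, (if C p = c ∧ E p = i then μ p * G c i else 0) := by
        refine Finset.sum_congr rfl fun p _ => ?_
        simp [ite_and]
    _ = ∑ c, ∑ p, ∑ i : ZMod m, (if C p = c ∧ E p = i then μ p * G c i else 0) :=
        Finset.sum_comm
    _ = ∑ c, ∑ i : ZMod m, ∑ p, (if C p = c ∧ E p = i then μ p * G c i else 0) :=
        Finset.sum_congr rfl fun c _ => Finset.sum_comm
    _ = ∑ c, ∑ i : ZMod m, (∑ p, if C p = c ∧ E p = i then μ p else 0) * G c i := by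
        refine Finset.sum_congr rfl fun c _ => Finset.sum_congr rfl fun i _ => ?_
        rw [Finset.sum_mul]
        exact Finset.sum_congr rfl fun p _ => by rw [ite_mul, zero_mul]

/-- Entropy of a distribution on `ZMod m` is at most `log m`. -/
lemma aux_ent_le_log {m : ℕ} [NeZero m] (u : ZMod m → ℝ) (hu0 : ∀ i, 0 ≤ u i)
    (hu1 : ∑ i, u i = 1) : ent u ≤ Real.log m := by
  have hm : (m : ℝ) ≠ 0 := Nat.cast_ne_zero.2 (NeZero.ne m)
  have hcard : ∑ _i : ZMod m, (m : ℝ)⁻¹ = 1 := by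
    rw [Finset.sum_const, Finset.card_univ, ZMod.card, nsmul_eq_mul, mul_inv_cancel₀ hm]
  have h := aux_LS u (fun _ => (m : ℝ)⁻¹) hu0 (fun _ => by positivity) hcard
    (fun c h0 => absurd h0 (inv_ne_zero hm))
  rw [hu1] at h
  have hz : Real.negMulLog 1 = 0 := by simp [Real.negMulLog]
  rw [hz] at h
  have key : ∀ i, Real.negMulLog (u i)
      = -(u i * Real.log (u i / (m : ℝ)⁻¹)) + u i * Real.log m := by
    intro i
    by_cases h0 : u i = 0
    · simp [h0, Real.negMulLog]
    · rw [Real.log_div h0 (inv_ne_zero hm), Real.log_inv]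
      simp only [Real.negMulLog]
      ring
  have : ent u = (∑ i, -(u i * Real.log (u i / (m : ℝ)⁻¹))) + Real.log m := by
    calc ent u = ∑ i, (-(u i * Real.log (u i / (m : ℝ)⁻¹)) + u i * Real.log m) :=
          Finset.sum_congr rfl fun i _ => key i
      _ = (∑ i, -(u i * Real.log (u i / (m : ℝ)⁻¹))) + ∑ i, u i * Real.log m :=
          Finset.sum_add_distrib
      _ = (∑ i, -(u i * Real.log (u i / (m : ℝ)⁻¹))) + Real.log m := by
          rw [← Finset.sum_mul, hu1, one_mul]
  linarith

/-- Conditional entropy is at most the entropy of the error of any estimator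
that is measurable with respect to the conditioning. -/
lemma aux_LA {α γ : Type*} [Fintype α] [Fintype γ] {m : ℕ} [NeZero m]
    (μ : α → ℝ) (hμ0 : ∀ p, 0 ≤ μ p) (hμ1 : ∑ p, μ p = 1)
    (C : α → γ) (A g : α → ZMod m) (hg : ∀ p q, C p = C q → g p = g q) :
    -∑ p, μ p * Real.log ((∑ q, if A q = A p ∧ C q = C p then μ q else 0) /
        (∑ q, if C q = C p then μ q else 0))
      ≤ ent (fun i => ∑ q, if A q - g q = i then μ q else 0) := by
  classical
  have key : ∀ p, (∑ q, if A q = A p ∧ C q = C p then μ q else 0)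
      = ∑ q, if C q = C p ∧ A q - g q = A p - g p then μ q else 0 := by
    intro p
    refine Finset.sum_congr rfl fun q _ => ?_
    refine if_congr ?_ rfl rfl
    constructor
    · rintro ⟨h1, h2⟩
      exact ⟨h2, by rw [h1, hg q p h2]⟩
    · rintro ⟨h2, h1⟩
      refine ⟨?_, h2⟩
      rwa [hg q p h2, sub_left_inj] at h1
  have hN : ∀ (c : γ) (i : ZMod m),
      0 ≤ ∑ q, if C q = c ∧ A q - g q = i then μ q else 0 := by
    intro c i
    refine Finset.sum_nonneg fun q _ => ?_
    split
    · exact hμ0 q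
    · exact le_rfl
  have hNw : ∀ c : γ, ∑ i : ZMod m, (∑ q, if C q = c ∧ A q - g q = i then μ q else 0)
      = ∑ q, if C q = c then μ q else 0 := by
    intro c
    rw [Finset.sum_comm]
    refine Finset.sum_congr rfl fun q _ => ?_
    by_cases hc : C q = c <;> simp [hc, Finset.sum_ite_eq]
  have hw1 : ∑ c : γ, (∑ q, if C q = c then μ q else 0) = 1 := by
    rw [Finset.sum_comm]
    simp only [Finset.sum_ite_eq, Finset.mem_univ, if_true]
    exact hμ1
  calc -∑ p, μ p * Real.log ((∑ q, if A q = A p ∧ C q = C p then μ q else 0) /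
        (∑ q, if C q = C p then μ q else 0))
      = ∑ p, μ p * -Real.log
          ((∑ q, if C q = C p ∧ A q - g q = A p - g p then μ q else 0) /
           (∑ q, if C q = C p then μ q else 0)) := by
        rw [← Finset.sum_neg_distrib]
        refine Finset.sum_congr rfl fun p _ => ?_
        rw [key p]
        ring
    _ = ∑ c : γ, ∑ i : ZMod m,
          (∑ q, if C q = c ∧ A q - g q = i then μ q else 0) *
          -Real.log ((∑ q, if C q = c ∧ A q - g q = i then μ q else 0) /
           (∑ q, if C q = c then μ q else 0)) :=
        aux_group_sum2 μ C (fun p => A p - g p)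
          (fun c i => -Real.log ((∑ q, if C q = c ∧ A q - g q = i then μ q else 0) /
            (∑ q, if C q = c then μ q else 0)))
    _ = ∑ c : γ, ∑ i : ZMod m,
          -((∑ q, if C q = c ∧ A q - g q = i then μ q else 0) *
            Real.log ((∑ q, if C q = c ∧ A q - g q = i then μ q else 0) /
              (∑ q, if C q = c then μ q else 0))) :=
        Finset.sum_congr rfl fun c _ => Finset.sum_congr rfl fun i _ => by ring
    _ ≤ ent (fun i => ∑ c : γ, ∑ q, if C q = c ∧ A q - g q = i then μ q else 0) :=
        aux_LB (fun c i => ∑ q, if C q = c ∧ A q - g q = i then μ q else 0)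
          (fun c => ∑ q, if C q = c then μ q else 0) hN hNw hw1
    _ = ent (fun i => ∑ q, if A q - g q = i then μ q else 0) := by
        congr 1
        funext i
        rw [Finset.sum_comm]
        refine Finset.sum_congr rfl fun q _ => ?_
        by_cases hc : A q - g q = i <;> simp [hc, Finset.sum_ite_eq]

/-- Distribution of the error `X_t - X̂_t`. -/
def vdist {n l m : ℕ} [NeZero m] {β : Type} [Fintype β]
    (μ : (Fin n → ZMod m) × (Fin (n + l) → β) → ℝ)
    (f : Fin n → (Fin (n + l) → β) → ZMod m) (t : Fin n) (i : ZMod m) : ℝ :=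
  ∑ p : (Fin n → ZMod m) × (Fin (n + l) → β), if p.1 t - f t p.2 = i then μ p else 0

/-- information-theoretic lower bound for filtering with lookahead
`l`, with subtractive loss `Λ(x,x') = ρ(x − x')` over `ZMod m`, `ρ(0) = 0`. For
any filters `X̂_t` based on `Z^{t+l}`,
`φ(E[(1/n) ∑_t Λ(X_t, X̂_t(Z^{t+l}))]) ≥ (1/n) ∑_t H(X_t | X^{t-1}, Z^{t+l})
  = (1/n) H(X^n ‖ Z^{n+l})`,
i.e. the expected normalized loss is at least `φ⁻¹((1/n) H(X^n ‖ Z^{n+l}))`. -/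
theorem lookahead_entropy_lower_bound
    {n l m : ℕ} [NeZero m] (hn : 0 < n) {β : Type} [Fintype β]
    (ρ : ZMod m → ℝ) (hρ0 : ∀ i, 0 ≤ ρ i) (hρz : ρ 0 = 0)
    (μ : (Fin n → ZMod m) × (Fin (n + l) → β) → ℝ)
    (hμ0 : ∀ p, 0 ≤ μ p) (hμ1 : ∑ p, μ p = 1)
    (f : Fin n → (Fin (n + l) → β) → ZMod m)
    (hf : ∀ (t : Fin n) (z z' : Fin (n + l) → β),
      (∀ s : Fin (n + l), (s : ℕ) ≤ (t : ℕ) + l → z s = z' s) → f t z = f t z') :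
    (n : ℝ)⁻¹ * ∑ t, condEntT μ t
      ≤ phi m ρ (∑ x : Fin n → ZMod m, ∑ z : Fin (n + l) → β,
          μ (x, z) * ((n : ℝ)⁻¹ * ∑ t, ρ (x t - f t z))) := by
  classical
  have hn0 : (n : ℝ) ≠ 0 := Nat.cast_ne_zero.2 hn.ne'
  have hv0 : ∀ (t : Fin n) (i : ZMod m), 0 ≤ vdist μ f t i := by
    intro t i
    unfold vdist
    refine Finset.sum_nonneg fun p _ => ?_
    split
    · exact hμ0 p
    · exact le_rfl
  have hvsum : ∀ t : Fin n, ∑ i, vdist μ f t i = 1 := by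
    intro t
    unfold vdist
    rw [Finset.sum_comm]
    simp only [Finset.sum_ite_eq, Finset.mem_univ, if_true]
    exact hμ1
  have hconst : ∑ _t : Fin n, (n : ℝ)⁻¹ = 1 := by
    rw [Finset.sum_const, Finset.card_univ, Fintype.card_fin, nsmul_eq_mul,
      mul_inv_cancel₀ hn0]
  -- Step 1: per-coordinate conditional entropy bound
  have hT1 : ∀ t : Fin n, condEntT μ t ≤ ent (vdist μ f t) := by
    intro t
    have hLA := aux_LA (γ := ({s : Fin n // s < t} → ZMod m) ×
        ({s : Fin (n + l) // (s : ℕ) ≤ (t : ℕ) + l} → β))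
      μ hμ0 hμ1
      (fun p => (fun s => p.1 s.1, fun s => p.2 s.1))
      (fun p => p.1 t) (fun p => f t p.2)
      (fun p q hpq => hf t p.2 q.2 fun s hs =>
        congrFun (congrArg Prod.snd hpq) ⟨s, hs⟩)
    refine le_trans (le_of_eq ?_) hLA
    unfold condEntT
    congr 1
    conv_rhs => rw [Fintype.sum_prod_type]
    refine Finset.sum_congr rfl fun x _ => Finset.sum_congr rfl fun z _ => ?_
    refine congrArg (fun r => μ (x, z) * Real.log r) ?_
    congr 1
    · refine Finset.sum_congr rfl fun q _ => aux_ite_eq_of_iff ?_ _ _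
      simp [Prod.ext_iff, funext_iff, Subtype.forall]
    · refine Finset.sum_congr rfl fun q _ => aux_ite_eq_of_iff ?_ _ _
      simp [Prod.ext_iff, funext_iff, Subtype.forall]
  -- Step 2: mixture (Jensen) bound
  have hT3 : (n : ℝ)⁻¹ * ∑ t, ent (vdist μ f t)
      ≤ ent (fun i => ∑ t, (n : ℝ)⁻¹ * vdist μ f t i) := by
    have h1 := aux_LB (fun t i => (n : ℝ)⁻¹ * vdist μ f t i) (fun _ => (n : ℝ)⁻¹)
      (fun t i => mul_nonneg (by positivity) (hv0 t i))
      (fun t => by rw [← Finset.mul_sum, hvsum t, mul_one]) hconst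
    refine le_trans (le_of_eq ?_) h1
    rw [Finset.mul_sum]
    refine Finset.sum_congr rfl fun t _ => ?_
    have hent : ent (vdist μ f t) = ∑ i, Real.negMulLog (vdist μ f t i) := rfl
    rw [hent, Finset.mul_sum]
    refine Finset.sum_congr rfl fun i _ => ?_
    have hdiv : ((n : ℝ)⁻¹ * vdist μ f t i) / (n : ℝ)⁻¹ = vdist μ f t i := by
      rw [mul_comm, mul_div_assoc, div_self (inv_ne_zero hn0), mul_one]
    rw [hdiv]
    simp only [Real.negMulLog]
    ring
  -- Step 3: the mixture is feasible for `phi`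
  have hDeq : ∑ i, (∑ t, (n : ℝ)⁻¹ * vdist μ f t i) * ρ i
      = ∑ x : Fin n → ZMod m, ∑ z : Fin (n + l) → β,
          μ (x, z) * ((n : ℝ)⁻¹ * ∑ t, ρ (x t - f t z)) := by
    calc ∑ i, (∑ t, (n : ℝ)⁻¹ * vdist μ f t i) * ρ i
        = ∑ i, ∑ t, (n : ℝ)⁻¹ * (vdist μ f t i * ρ i) := by
          refine Finset.sum_congr rfl fun i _ => ?_
          rw [Finset.sum_mul]
          exact Finset.sum_congr rfl fun t _ => by ring
      _ = ∑ t, (n : ℝ)⁻¹ * ∑ i, vdist μ f t i * ρ i := by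
          rw [Finset.sum_comm]
          exact Finset.sum_congr rfl fun t _ => (Finset.mul_sum _ _ _).symm
      _ = ∑ t, (n : ℝ)⁻¹ * ∑ p : (Fin n → ZMod m) × (Fin (n + l) → β),
            μ p * ρ (p.1 t - f t p.2) := by
          refine Finset.sum_congr rfl fun t _ => ?_
          congr 1
          unfold vdist
          simp_rw [Finset.sum_mul, ite_mul, zero_mul]
          rw [Finset.sum_comm]
          refine Finset.sum_congr rfl fun p _ => ?_
          simp
      _ = ∑ p : (Fin n → ZMod m) × (Fin (n + l) → β),
            μ p * ((n : ℝ)⁻¹ * ∑ t, ρ (p.1 t - f t p.2)) := by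
          simp_rw [Finset.mul_sum]
          rw [Finset.sum_comm]
          exact Finset.sum_congr rfl fun p _ => Finset.sum_congr rfl fun t _ => by ring
      _ = ∑ x : Fin n → ZMod m, ∑ z : Fin (n + l) → β,
            μ (x, z) * ((n : ℝ)⁻¹ * ∑ t, ρ (x t - f t z)) :=
          Fintype.sum_prod_type _
  have hmem : ent (fun i => ∑ t, (n : ℝ)⁻¹ * vdist μ f t i) ∈
      {h : ℝ | ∃ u : ZMod m → ℝ, (∀ i, 0 ≤ u i) ∧ (∑ i, u i = 1) ∧
        (∑ i, u i * ρ i ≤ ∑ x : Fin n → ZMod m, ∑ z : Fin (n + l) → β,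
          μ (x, z) * ((n : ℝ)⁻¹ * ∑ t, ρ (x t - f t z))) ∧ h = ent u} := by
    refine ⟨fun i => ∑ t, (n : ℝ)⁻¹ * vdist μ f t i,
      fun i => Finset.sum_nonneg fun t _ => mul_nonneg (by positivity) (hv0 t i),
      ?_, le_of_eq hDeq, rfl⟩
    rw [Finset.sum_comm]
    calc ∑ t : Fin n, ∑ i, (n : ℝ)⁻¹ * vdist μ f t i
        = ∑ _t : Fin n, (n : ℝ)⁻¹ :=
          Finset.sum_congr rfl fun t _ => by rw [← Finset.mul_sum, hvsum t, mul_one]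
      _ = 1 := hconst
  have hbdd : BddAbove {h : ℝ | ∃ u : ZMod m → ℝ, (∀ i, 0 ≤ u i) ∧ (∑ i, u i = 1) ∧
      (∑ i, u i * ρ i ≤ ∑ x : Fin n → ZMod m, ∑ z : Fin (n + l) → β,
        μ (x, z) * ((n : ℝ)⁻¹ * ∑ t, ρ (x t - f t z))) ∧ h = ent u} := by
    refine ⟨Real.log m, ?_⟩
    rintro h ⟨u, hu0, hu1, -, rfl⟩
    exact aux_ent_le_log u hu0 hu1
  calc (n : ℝ)⁻¹ * ∑ t, condEntT μ t
      ≤ (n : ℝ)⁻¹ * ∑ t, ent (vdist μ f t) :=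
        mul_le_mul_of_nonneg_left (Finset.sum_le_sum fun t _ => hT1 t) (by positivity)
    _ ≤ ent (fun i => ∑ t, (n : ℝ)⁻¹ * vdist μ f t i) := hT3
    _ ≤ phi m ρ (∑ x : Fin n → ZMod m, ∑ z : Fin (n + l) → β,
          μ (x, z) * ((n : ℝ)⁻¹ * ∑ t, ρ (x t - f t z))) := le_csSup hbdd hmem
end
end

section
/- With subtractive loss over Z/mZ as above, the optimal denoiser with access to the full noisy sequence satisfies E[(1/n)Σ_{t=1}^n Λ(X_t, X̂^opt(Z^n))] ≥ φ^{-1}((1/n)·H(X^n | Z^n)). -/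
/-!
Let `u` be the law of the error `X_t - X̂_t(Z^n)`, averaged over `t`. Its `ρ`-mean is the expected
distortion `D`, so `H(u) ≤ φ(D)`. On the other hand, since translations permute `ZMod m`,
`x ↦ ∏_t u(x_t - X̂_t(z))` is a probability on `X^n` for every `z`, and it charges every `x` that
`μ(·, z)` does. Gibbs' inequality against this conditional law bounds `H(X^n | Z^n)` by the
cross-entropy `-E[∑_t log u(X_t - X̂_t)]`, which is exactly `n H(u)`.
-/

open Finset
open scoped Classical

noncomputable section

/-- The inverse of `φ`: the least `D ≥ 0` with `φ(D) ≥ y`. -/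
def phiInv (m : ℕ) [NeZero m] (ρ : ZMod m → ℝ) (y : ℝ) : ℝ :=
  sInf {D : ℝ | 0 ≤ D ∧ y ≤ phi m ρ D}

/-- Conditional entropy `H(X^n | Z^n)` under the joint law `μ`. -/
def condEntXZ {n m : ℕ} [NeZero m] {β : Type} [Fintype β]
    (μ : (Fin n → ZMod m) × (Fin n → β) → ℝ) : ℝ :=
  -∑ x : Fin n → ZMod m, ∑ z : Fin n → β,
    μ (x, z) * Real.log (μ (x, z) / ∑ x' : Fin n → ZMod m, μ (x', z))

namespace Real

theorem mul_log_sub_mul_log_div_le {p w k : ℝ} (hp : 0 ≤ p) (hpw : p ≤ w) (hk : 0 ≤ k)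
    (hpk : 0 < p → 0 < k) : p * log k - p * log (p / w) ≤ w * k - p := by
  rcases hp.eq_or_lt with rfl | hp
  · simpa using mul_nonneg hpw hk
  have hk := hpk hp
  have hw := hp.trans_le hpw
  calc p * log k - p * log (p / w) = p * log (w * k / p) := by
        rw [log_div (by positivity) hp.ne', log_mul hw.ne' hk.ne', log_div hp.ne' hw.ne']
        ring
    _ ≤ p * (w * k / p - 1) := by gcongr; exact log_le_sub_one_of_pos (by positivity)
    _ = w * k - p := by field_simp

end Real

theorem ent_le_card {β : Type} [Fintype β] {v : β → ℝ} (hv : ∀ b, 0 ≤ v b) :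
    ent v ≤ Fintype.card β :=
  calc ent v ≤ ∑ b, (1 - v b) := sum_le_sum fun b _ => Real.negMulLog_le_one_sub_self (hv b)
    _ ≤ ∑ _b : β, 1 := sum_le_sum fun b _ => by linarith [hv b]
    _ = Fintype.card β := by simp

theorem phiInv_le_of_le_ent {m : ℕ} [NeZero m] {ρ : ZMod m → ℝ} {v : ZMod m → ℝ} {y D : ℝ}
    (hv0 : ∀ i, 0 ≤ v i) (hv1 : ∑ i, v i = 1) (hvD : ∑ i, v i * ρ i ≤ D) (hD : 0 ≤ D)
    (hy : y ≤ ent v) : phiInv m ρ y ≤ D := by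
  have hbdd : BddAbove {h : ℝ | ∃ u : ZMod m → ℝ,
      (∀ i, 0 ≤ u i) ∧ (∑ i, u i = 1) ∧ (∑ i, u i * ρ i ≤ D) ∧ h = ent u} := by
    refine ⟨Fintype.card (ZMod m), ?_⟩
    rintro _ ⟨u, hu0, -, -, rfl⟩
    exact ent_le_card hu0
  exact csInf_le ⟨0, fun _ hD => hD.1⟩ ⟨hD, hy.trans (le_csSup hbdd ⟨v, hv0, hv1, hvD, rfl⟩)⟩

theorem sum_prod_sub_eq_sum_pow {ι G : Type*} [Fintype ι] [DecidableEq ι] [Fintype G]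
    [AddGroup G] (v : G → ℝ) (c : ι → G) :
    ∑ x : ι → G, ∏ i, v (x i - c i) = (∑ a, v a) ^ Fintype.card ι :=
  calc ∑ x : ι → G, ∏ i, v (x i - c i) = ∏ i, ∑ a, v (a - c i) :=
        (Fintype.prod_sum fun i a => v (a - c i)).symm
    _ = ∏ _i : ι, ∑ a, v a :=
        prod_congr rfl fun i _ => Equiv.sum_comp (Equiv.subRight (c i)) v
    _ = (∑ a, v a) ^ Fintype.card ι := by rw [prod_const, card_univ]

section avgMarginal

variable {Ω ι G : Type} [Fintype Ω] [Fintype ι]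

def avgMarginal (μ : Ω → ℝ) (e : ι → Ω → G) (a : G) : ℝ :=
  (Fintype.card ι : ℝ)⁻¹ * ∑ i, ∑ ω with e i ω = a, μ ω

variable {μ : Ω → ℝ} (e : ι → Ω → G)

theorem avgMarginal_nonneg (hμ : ∀ ω, 0 ≤ μ ω) (a : G) : 0 ≤ avgMarginal μ e a :=
  mul_nonneg (by positivity) <| sum_nonneg fun i _ => sum_nonneg fun ω _ => hμ ω

theorem avgMarginal_pos (hμ : ∀ ω, 0 ≤ μ ω) {ω : Ω} (hω : 0 < μ ω) (i : ι) :
    0 < avgMarginal μ e (e i ω) := by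
  have : Nonempty ι := ⟨i⟩
  refine mul_pos (by positivity) (hω.trans_le ?_)
  calc μ ω ≤ ∑ ω' with e i ω' = e i ω, μ ω' :=
        single_le_sum (fun ω' _ => hμ ω') (mem_filter.2 ⟨mem_univ ω, rfl⟩)
    _ ≤ ∑ i', ∑ ω' with e i' ω' = e i ω, μ ω' :=
        single_le_sum (f := fun i' => ∑ ω' with e i' ω' = e i ω, μ ω')
          (fun i' _ => sum_nonneg fun ω' _ => hμ ω') (mem_univ i)

variable [Fintype G]

theorem sum_avgMarginal_mul (F : G → ℝ) :
    ∑ a, avgMarginal μ e a * F a = (Fintype.card ι : ℝ)⁻¹ * ∑ ω, μ ω * ∑ i, F (e i ω) :=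
  calc ∑ a, avgMarginal μ e a * F a
        = (Fintype.card ι : ℝ)⁻¹ * ∑ a, ∑ i, ∑ ω with e i ω = a, μ ω * F a := by
          simp only [avgMarginal, mul_assoc, ← mul_sum, sum_mul]
    _ = (Fintype.card ι : ℝ)⁻¹ * ∑ i, ∑ ω, μ ω * F (e i ω) := by
          rw [sum_comm]
          congr 1
          refine sum_congr rfl fun i _ => ?_
          rw [← sum_fiberwise univ (e i) fun ω => μ ω * F (e i ω)]
          exact sum_congr rfl fun a _ => sum_congr rfl fun ω hω => by rw [(mem_filter.1 hω).2]
    _ = (Fintype.card ι : ℝ)⁻¹ * ∑ ω, μ ω * ∑ i, F (e i ω) := by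
          simp only [mul_sum]
          rw [sum_comm]

theorem sum_avgMarginal [Nonempty ι] (hμ : ∑ ω, μ ω = 1) : ∑ a, avgMarginal μ e a = 1 := by
  simpa [← sum_mul, hμ] using sum_avgMarginal_mul (μ := μ) e 1

theorem ent_avgMarginal :
    ent (avgMarginal μ e) =
      -((Fintype.card ι : ℝ)⁻¹ * ∑ ω, μ ω * ∑ i, Real.log (avgMarginal μ e (e i ω))) := by
  rw [ent, ← sum_avgMarginal_mul e fun a => Real.log (avgMarginal μ e a), ← sum_neg_distrib]
  simp only [Real.negMulLog, neg_mul]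

end avgMarginal

section condEntXZ

variable {n m : ℕ} [NeZero m] {β : Type} [Fintype β] {μ : (Fin n → ZMod m) × (Fin n → β) → ℝ}

theorem condEntXZ_le_neg_sum_mul_log (hμ : ∀ p, 0 ≤ μ p)
    (κ : (Fin n → β) → (Fin n → ZMod m) → ℝ) (hκ0 : ∀ z x, 0 ≤ κ z x)
    (hκ1 : ∀ z, ∑ x, κ z x ≤ 1) (hκμ : ∀ x z, 0 < μ (x, z) → 0 < κ z x) :
    condEntXZ μ ≤ -∑ x, ∑ z, μ (x, z) * Real.log (κ z x) := by
  set w : (Fin n → β) → ℝ := fun z => ∑ x', μ (x', z)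
  have hterm : ∀ x z, μ (x, z) * Real.log (κ z x) - μ (x, z) * Real.log (μ (x, z) / w z)
      ≤ w z * κ z x - μ (x, z) := fun x z =>
    Real.mul_log_sub_mul_log_div_le (hμ _)
      (single_le_sum (f := fun x' => μ (x', z)) (fun _ _ => hμ _) (mem_univ x)) (hκ0 z x)
      (hκμ x z)
  have hmass : ∑ x, ∑ z, w z * κ z x ≤ ∑ x, ∑ z, μ (x, z) :=
    calc ∑ x, ∑ z, w z * κ z x = ∑ z, w z * ∑ x, κ z x := by
          rw [sum_comm]; simp only [mul_sum]
      _ ≤ ∑ z, w z * 1 :=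
          sum_le_sum fun z _ => mul_le_mul_of_nonneg_left (hκ1 z) (sum_nonneg fun _ _ => hμ _)
      _ = ∑ x, ∑ z, μ (x, z) := by rw [sum_comm]; simp only [mul_one, w]
  have hsum := sum_le_sum fun x (_ : x ∈ univ) => sum_le_sum fun z (_ : z ∈ univ) => hterm x z
  simp only [sum_sub_distrib] at hsum
  rw [condEntXZ]
  linarith

theorem condEntXZ_le_neg_sum_mul_sum_log {v : ZMod m → ℝ} (hμ : ∀ p, 0 ≤ μ p)
    (hv0 : ∀ a, 0 ≤ v a) (hv1 : ∑ a, v a = 1) (f : Fin n → (Fin n → β) → ZMod m)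
    (hvμ : ∀ x z t, 0 < μ (x, z) → 0 < v (x t - f t z)) :
    condEntXZ μ ≤ -∑ x, ∑ z, μ (x, z) * ∑ t, Real.log (v (x t - f t z)) := by
  have hκ1 (z : Fin n → β) : ∑ x : Fin n → ZMod m, ∏ t, v (x t - f t z) ≤ 1 := by
    rw [sum_prod_sub_eq_sum_pow v fun t => f t z, hv1, one_pow]
  refine (condEntXZ_le_neg_sum_mul_log hμ (fun z x => ∏ t, v (x t - f t z))
    (fun z x => prod_nonneg fun t _ => hv0 _) hκ1
    (fun x z h => prod_pos fun t _ => hvμ x z t h)).trans_eq ?_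
  congr 1
  refine sum_congr rfl fun x _ => sum_congr rfl fun z _ => ?_
  rcases (hμ (x, z)).eq_or_lt with h | h
  · simp [← h]
  · rw [Real.log_prod fun t _ => (hvμ x z t h).ne']

end condEntXZ

theorem full_sequence_entropy_lower_bound_general
    {n m : ℕ} [NeZero m] (hn : 0 < n) {β : Type} [Fintype β]
    (ρ : ZMod m → ℝ) (hρ0 : ∀ i, 0 ≤ ρ i)
    (μ : (Fin n → ZMod m) × (Fin n → β) → ℝ)
    (hμ0 : ∀ p, 0 ≤ μ p) (hμ1 : ∑ p, μ p = 1)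
    (f : Fin n → (Fin n → β) → ZMod m) :
    phiInv m ρ ((n : ℝ)⁻¹ * condEntXZ μ)
      ≤ ∑ x : Fin n → ZMod m, ∑ z : Fin n → β,
          μ (x, z) * ((n : ℝ)⁻¹ * ∑ t, ρ (x t - f t z)) := by
  have : Nonempty (Fin n) := ⟨⟨0, hn⟩⟩
  set u := avgMarginal μ fun t (p : (Fin n → ZMod m) × (Fin n → β)) => p.1 t - f t p.2
  have hu0 : ∀ a, 0 ≤ u a := avgMarginal_nonneg _ hμ0
  have hu1 : ∑ a, u a = 1 := sum_avgMarginal _ hμ1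
  have hdist : ∑ a, u a * ρ a = ∑ x : Fin n → ZMod m, ∑ z : Fin n → β,
      μ (x, z) * ((n : ℝ)⁻¹ * ∑ t, ρ (x t - f t z)) := by
    rw [sum_avgMarginal_mul, Fintype.card_fin, Fintype.sum_prod_type, mul_sum]
    simp only [mul_sum, mul_left_comm]
  have hent : (n : ℝ)⁻¹ * condEntXZ μ ≤ ent u := by
    rw [ent_avgMarginal, Fintype.card_fin, Fintype.sum_prod_type, ← mul_neg]
    exact mul_le_mul_of_nonneg_left (condEntXZ_le_neg_sum_mul_sum_log hμ0 hu0 hu1 f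
      fun x z t h => avgMarginal_pos _ hμ0 h t) (by positivity)
  exact phiInv_le_of_le_ent hu0 hu1 hdist.le
    (hdist ▸ sum_nonneg fun a _ => mul_nonneg (hu0 a) (hρ0 a)) hent

/-- with subtractive loss `Λ(x,x') = ρ(x − x')` over `ZMod m`
(`ρ(0) = 0`), any denoiser `X̂_t(Z^n)` with access to the full noisy sequence
satisfies `E[(1/n) ∑_t Λ(X_t, X̂_t(Z^n))] ≥ φ⁻¹((1/n) H(X^n | Z^n))`. -/
theorem full_sequence_entropy_lower_bound
    {n m : ℕ} [NeZero m] (hn : 0 < n) {β : Type} [Fintype β]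
    (ρ : ZMod m → ℝ) (hρ0 : ∀ i, 0 ≤ ρ i) (hρz : ρ 0 = 0)
    (μ : (Fin n → ZMod m) × (Fin n → β) → ℝ)
    (hμ0 : ∀ p, 0 ≤ μ p) (hμ1 : ∑ p, μ p = 1)
    (f : Fin n → (Fin n → β) → ZMod m) :
    phiInv m ρ ((n : ℝ)⁻¹ * condEntXZ μ)
      ≤ ∑ x : Fin n → ZMod m, ∑ z : Fin n → β,
          μ (x, z) * ((n : ℝ)⁻¹ * ∑ t, ρ (x t - f t z)) :=
  full_sequence_entropy_lower_bound_general hn ρ hρ0 μ hμ0 hμ1 f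
end
end
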